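/- arXiv:1308.0626 — 8 statements merged into one kernel-verified Lean document; each statement's English description precedes it below -/
import Mathlib

section
/- (Dichotomy lemma, corollary form) Let R be a box with a partition into vertical strips 𝒮, let F be a set of points with distinct x-coordinates, and let μ ∈ (0,1). For each index x ∈ X(R) let s(x) be the width of the strip containing x. Call an index x safe if for every substrip S of R adjacent to x (i.e., with x_L(S)=x or x_R(S)=x−1), the number of points of F in S incomparable with F(x) is at most μ·|F ∩ S| + s(x); otherwise unsafe. Let D⃗ be any box chain compatible with the strip decomposition, let χ = |R ∩ F|, χ^{in} = |D⃗^∪ ∩ F|, and let S be the set of safe indices x with F(x) ∈ D⃗^∪. Then χ^{in} ≤ (1 − μ)·χ + μ·|S|. -/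
/-!
Split the points of `F ∩ R` into the chain points and the outside points `O`; the claim is
equivalent to `μ · #U ≤ (1 - μ) · #O` for the unsafe chain points `U`. A point incomparable with
a chain point `F(x)` but outside the strip of `x` lies strictly below-right or strictly above-left
of the staircase of chain corners `(z i, h i)`, and these two regions are disjoint. So the
violating substrip of an unsafe `x` yields an interval `[x, v]` or `[u, x]` on which the outside
points of one side number at least `μ / (1 - μ)` times the chain points. A greedy covering by such
intervals (take the leftmost point, drop its interval, recurse) adds the local inequalities up.
-/

open Finset

section Covering
variable {α : Type*} [LinearOrder α] [LocallyFiniteOrder α] {μ ν : ℝ}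

theorem mul_card_le_of_forall_exists_Icc_right (hν : 0 ≤ ν) (U O : Finset α)
    (h : ∀ x ∈ U, ∃ v, x ≤ v ∧ μ * #(U ∩ Icc x v) ≤ ν * #(O ∩ Icc x v)) :
    μ * #U ≤ ν * #O := by
  induction U using Finset.strongInduction generalizing O with
  | H U ih =>
  rcases U.eq_empty_or_nonempty with rfl | hne
  · simpa using mul_nonneg hν (Nat.cast_nonneg #O)
  obtain ⟨v, hxv, hx⟩ := h _ (U.min'_mem hne)
  have hU : U ∩ Icc (U.min' hne) v = {y ∈ U | ¬ v < y} := by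
    ext y
    simp only [mem_inter, mem_Icc, mem_filter, not_lt]
    exact ⟨fun h => ⟨h.1, h.2.2⟩, fun h => ⟨h.1, U.min'_le y h.1, h.2⟩⟩
  have hO : #(O ∩ Icc (U.min' hne) v) ≤ #{y ∈ O | ¬ v < y} :=
    card_le_card fun y hy => by simp_all
  have hrest : μ * #{y ∈ U | v < y} ≤ ν * #{y ∈ O | v < y} := by
    refine ih _ ?_ _ fun x hx => ?_
    · refine filter_ssubset.2 ⟨U.min' hne, U.min'_mem hne, ?_⟩
      exact not_lt.2 hxv
    · obtain ⟨hxU, hvx⟩ := mem_filter.1 hx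
      obtain ⟨w, hxw, hw⟩ := h x hxU
      refine ⟨w, hxw, ?_⟩
      have hI : ∀ s : Finset α, {y ∈ s | v < y} ∩ Icc x w = s ∩ Icc x w := fun s => by
        ext y
        simp only [mem_inter, mem_filter, mem_Icc]
        exact ⟨fun h => ⟨h.1.1, h.2⟩, fun h => ⟨⟨h.1, hvx.trans_le h.2.1⟩, h.2⟩⟩
      rwa [hI, hI]
  have hUsplit := card_filter_add_card_filter_not (s := U) (p := fun y => v < y)
  have hOsplit := card_filter_add_card_filter_not (s := O) (p := fun y => v < y)
  rw [hU] at hx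
  rw [← hUsplit, ← hOsplit]
  push_cast
  have := mul_le_mul_of_nonneg_left (Nat.cast_le.2 hO) hν
  linarith

theorem mul_card_le_of_forall_exists_Icc_left (hν : 0 ≤ ν) (U O : Finset α)
    (h : ∀ x ∈ U, ∃ u, u ≤ x ∧ μ * #(U ∩ Icc u x) ≤ ν * #(O ∩ Icc u x)) :
    μ * #U ≤ ν * #O :=
  mul_card_le_of_forall_exists_Icc_right (α := αᵒᵈ) hν U O h

theorem mul_card_le_of_forall_exists_Icc (hμ : 0 ≤ μ) (hν : 0 ≤ ν) {U S O₁ O₂ : Finset α}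
    (hUS : U ⊆ S)
    (h : ∀ x ∈ U, (∃ v, x ≤ v ∧ μ * #(S ∩ Icc x v) ≤ ν * #(O₁ ∩ Icc x v)) ∨
      ∃ u, u ≤ x ∧ μ * #(S ∩ Icc u x) ≤ ν * #(O₂ ∩ Icc u x)) :
    μ * #U ≤ ν * (#O₁ + #O₂) := by
  classical
  set p := fun x => ∃ v, x ≤ v ∧ μ * #(S ∩ Icc x v) ≤ ν * #(O₁ ∩ Icc x v)
  have hmono (V I : Finset α) (hV : V ⊆ U) : μ * #(V ∩ I) ≤ μ * #(S ∩ I) :=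
    mul_le_mul_of_nonneg_left
      (Nat.cast_le.2 (card_le_card (inter_subset_inter_right (hV.trans hUS)))) hμ
  have hR : μ * #(U.filter p) ≤ ν * #O₁ := by
    refine mul_card_le_of_forall_exists_Icc_right hν _ O₁ fun x hx => ?_
    obtain ⟨v, hxv, hv⟩ := (mem_filter.1 hx).2
    exact ⟨v, hxv, (hmono _ _ (filter_subset _ _)).trans hv⟩
  have hL : μ * #(U.filter (¬ p ·)) ≤ ν * #O₂ := by
    refine mul_card_le_of_forall_exists_Icc_left hν _ O₂ fun x hx => ?_
    obtain ⟨hxU, hxp⟩ := mem_filter.1 hx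
    obtain ⟨u, hux, hu⟩ := (h x hxU).resolve_left hxp
    exact ⟨u, hux, (hmono _ _ (filter_subset _ _)).trans hu⟩
  rw [← card_filter_add_card_filter_not p]
  push_cast
  linarith

end Covering

theorem card_filter_le_of_mul_card_le {α : Type*} {μ : ℝ} (s : Finset α) (p q : α → Prop)
    [DecidablePred p] [DecidablePred q]
    (h : μ * #{x ∈ s.filter p | ¬ q x} ≤ (1 - μ) * #{x ∈ s | ¬ p x}) :
    (#(s.filter p) : ℝ) ≤ (1 - μ) * #s + μ * #{x ∈ s.filter p | q x} := by
  rw [← card_filter_add_card_filter_not (s := s) p,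
    ← card_filter_add_card_filter_not (s := s.filter p) q] at *
  push_cast at *
  linarith

-- `A` stands for the points of a violating substrip `I` incomparable with `x`, and `W` for the
-- part of the strip of `x` that they may occupy.
theorem mul_card_inter_insert_le_of_lt_card {α : Type*} [DecidableEq α] {μ : ℝ} (hμ0 : 0 ≤ μ)
    (hμ1 : μ ≤ 1) {A B C O W I : Finset α} {s : ℕ} {x : α} (hxC : x ∈ C) (hxI : x ∉ I)
    (hCO : Disjoint C O) (hB : (C ∪ O) ∩ I ⊆ B) (hA : A ⊆ W ∪ O ∩ I) (hW : #W < s)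
    (hgt : μ * #B + s < #A) :
    μ * #(C ∩ insert x I) ≤ (1 - μ) * #(O ∩ insert x I) := by
  have hC : #(C ∩ insert x I) = #(C ∩ I) + 1 := by
    rw [inter_insert_of_mem hxC, card_insert_of_notMem fun h => hxI (mem_inter.1 h).2]
  have hO : O ∩ insert x I = O ∩ I := inter_insert_of_notMem (disjoint_left.1 hCO hxC)
  have hCOB : #(C ∩ I) + #(O ∩ I) ≤ #B := by
    rw [← card_union_of_disjoint (hCO.mono inter_subset_left inter_subset_left),
      ← union_inter_distrib_right]
    exact card_le_card hB
  have hAWO : #A ≤ #W + #(O ∩ I) := (card_le_card hA).trans (card_union_le _ _)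
  rw [hC, hO]
  have hCOB' : (#(C ∩ I) : ℝ) + #(O ∩ I) ≤ #B := by exact_mod_cast hCOB
  have hAWO' : (#A : ℝ) + 1 ≤ s + #(O ∩ I) := by exact_mod_cast (by omega : #A + 1 ≤ s + #(O ∩ I))
  push_cast
  linarith [mul_le_mul_of_nonneg_left hCOB' hμ0]

theorem ncard_setOf_Ioc (u v : ℕ) (p : ℕ → Prop) [DecidablePred p] :
    {y | u < y ∧ y ≤ v ∧ p y}.ncard = #{y ∈ Ioc u v | p y} := by
  rw [← Set.ncard_coe_finset]
  congr
  ext y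
  simp [and_assoc]

def pointsIn (a b c d : ℕ) (f : ℕ → ℕ) : Finset ℕ := {x ∈ Ioc a b | c ≤ f x ∧ f x ≤ d}

structure BoxChain where
  m : ℕ
  z : ℕ → ℕ
  h : ℕ → ℕ
  strictMonoOn_z : StrictMonoOn z (Set.Iic m)
  monotoneOn_h : MonotoneOn h (Set.Iic m)

namespace BoxChain

variable (D : BoxChain)

def Mem (p : ℕ × ℕ) : Prop :=
  ∃ i < D.m, D.z i < p.1 ∧ p.1 ≤ D.z (i + 1) ∧ D.h i ≤ p.2 ∧ p.2 ≤ D.h (i + 1)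

def BelowRight (p : ℕ × ℕ) : Prop := ∃ j ≤ D.m, D.z j < p.1 ∧ p.2 < D.h j

def AboveLeft (p : ℕ × ℕ) : Prop := ∃ j ≤ D.m, p.1 ≤ D.z j ∧ D.h j < p.2

instance : DecidablePred D.Mem := fun _ => by unfold Mem; infer_instance

instance : DecidablePred D.BelowRight := fun _ => by unfold BelowRight; infer_instance

instance : DecidablePred D.AboveLeft := fun _ => by unfold AboveLeft; infer_instance

variable {D}

theorem lt_of_z_lt_z {i j : ℕ} (hi : i ≤ D.m) (hj : j ≤ D.m) (h : D.z i < D.z j) : i < j :=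
  (D.strictMonoOn_z.lt_iff_lt hi hj).1 h

theorem BelowRight.not_mem {p : ℕ × ℕ} (hp : D.BelowRight p) : ¬ D.Mem p := by
  rintro ⟨i, hi, -, hpi, hhi, -⟩
  obtain ⟨j, hj, hzj, hhj⟩ := hp
  have hji : j ≤ i := Nat.lt_succ_iff.1 (lt_of_z_lt_z hj hi (hzj.trans_le hpi))
  have : D.h j ≤ D.h i := D.monotoneOn_h (Set.mem_Iic.2 hj) (Set.mem_Iic.2 hi.le) hji
  omega

theorem AboveLeft.not_mem {p : ℕ × ℕ} (hp : D.AboveLeft p) : ¬ D.Mem p := by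
  rintro ⟨i, hi, hip, -, -, hhi⟩
  obtain ⟨j, hj, hzj, hhj⟩ := hp
  have hij : i < j := lt_of_z_lt_z hi.le hj (hip.trans_le hzj)
  have : D.h (i + 1) ≤ D.h j := D.monotoneOn_h (Set.mem_Iic.2 hi) (Set.mem_Iic.2 hj) hij
  omega

theorem BelowRight.not_aboveLeft {p : ℕ × ℕ} (hp : D.BelowRight p) : ¬ D.AboveLeft p := by
  rintro ⟨k, hk, hzk, hhk⟩
  obtain ⟨j, hj, hzj, hhj⟩ := hp
  have := D.monotoneOn_h (Set.mem_Iic.2 hj) (Set.mem_Iic.2 hk)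
    (lt_of_z_lt_z hj hk (hzj.trans_le hzk)).le
  omega

theorem filter_Ioc_mem_eq {a b c d : ℕ} {f : ℕ → ℕ} (hh : ∀ i ≤ D.m, c ≤ D.h i ∧ D.h i ≤ d) :
    {x ∈ Ioc a b | D.Mem (x, f x)} = {x ∈ pointsIn a b c d f | D.Mem (x, f x)} := by
  ext x
  simp only [pointsIn, mem_filter, mem_Ioc]
  refine ⟨fun ⟨hxab, hx⟩ => ⟨⟨hxab, ?_⟩, hx⟩, fun ⟨⟨hxab, _⟩, hx⟩ => ⟨hxab, hx⟩⟩
  obtain ⟨i, hi, -, -, hhx, hxh⟩ := hx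
  exact ⟨(hh i hi.le).1.trans hhx, hxh.trans (hh (i + 1) hi).2⟩

variable {μ : ℝ} {f : ℕ → ℕ} {a b c d s : ℕ}

theorem mul_card_Icc_le_of_lt_card_right (hμ0 : 0 ≤ μ) (hμ1 : μ ≤ 1) {x v : ℕ}
    (hx : x ∈ {y ∈ pointsIn a b c d f | D.Mem (y, f y)}) (hxv : x ≤ v) (hvb : v ≤ b)
    (hs : ∀ i < D.m, D.z i < x → x ≤ D.z (i + 1) → D.z (i + 1) - D.z i ≤ s)
    (hgt : μ * #{y ∈ Ioc x v | c ≤ f y ∧ f y ≤ d} + s < #{y ∈ Ioc x v | c ≤ f y ∧ f y ≤ d ∧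
      ¬ ((y, f y) : ℕ × ℕ) ≤ (x, f x) ∧ ¬ ((x, f x) : ℕ × ℕ) ≤ (y, f y)}) :
    μ * #({y ∈ pointsIn a b c d f | D.Mem (y, f y)} ∩ Icc x v)
      ≤ (1 - μ) * #({y ∈ pointsIn a b c d f | D.BelowRight (y, f y)} ∩ Icc x v) := by
  obtain ⟨hxP, i, hi, hzx, hxz, -, hfx⟩ := mem_filter.1 hx
  have hax : a < x := (mem_Ioc.1 (mem_filter.1 hxP).1).1
  rw [← Ioc_insert_left hxv]
  refine mul_card_inter_insert_le_of_lt_card hμ0 hμ1 hx (by simp)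
    (disjoint_filter.2 fun y _ hy hb => hb.not_mem hy) ?_ ?_ (W := Ioc x (D.z (i + 1)))
    (by have := hs i hi hzx hxz; simp only [Nat.card_Ioc]; omega) hgt
  · intro y hy
    simp only [pointsIn, mem_inter, mem_union, mem_filter] at hy ⊢
    tauto
  · intro y hy
    obtain ⟨hyI, hcy, hyd, -, hxy⟩ := mem_filter.1 hy
    have hxy' := mem_Ioc.1 hyI
    have hfy : f y < f x := by
      by_contra! hle
      exact hxy (Prod.mk_le_mk.2 ⟨hxy'.1.le, hle⟩)
    by_cases hyz : y ≤ D.z (i + 1)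
    · exact mem_union_left _ (mem_Ioc.2 ⟨hxy'.1, hyz⟩)
    · refine mem_union_right _ (mem_inter.2 ⟨mem_filter.2 ⟨?_, i + 1, hi, by omega, by omega⟩, hyI⟩)
      simp only [pointsIn, mem_filter, mem_Ioc]
      omega

theorem mul_card_Icc_le_of_lt_card_left (hμ0 : 0 ≤ μ) (hμ1 : μ ≤ 1) {x u : ℕ}
    (hx : x ∈ {y ∈ pointsIn a b c d f | D.Mem (y, f y)}) (hau : a ≤ u) (hux : u < x)
    (hs : ∀ i < D.m, D.z i < x → x ≤ D.z (i + 1) → D.z (i + 1) - D.z i ≤ s)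
    (hgt : μ * #{y ∈ Ioc u (x - 1) | c ≤ f y ∧ f y ≤ d} + s < #{y ∈ Ioc u (x - 1) |
      c ≤ f y ∧ f y ≤ d ∧ ¬ ((y, f y) : ℕ × ℕ) ≤ (x, f x) ∧ ¬ ((x, f x) : ℕ × ℕ) ≤ (y, f y)}) :
    μ * #({y ∈ pointsIn a b c d f | D.Mem (y, f y)} ∩ Icc (u + 1) x)
      ≤ (1 - μ) * #({y ∈ pointsIn a b c d f | D.AboveLeft (y, f y)} ∩ Icc (u + 1) x) := by
  obtain ⟨hxP, i, hi, hzx, hxz, hfx, -⟩ := mem_filter.1 hx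
  have hxb : x ≤ b := (mem_Ioc.1 (mem_filter.1 hxP).1).2
  have hIcc : Icc (u + 1) x = insert x (Ioc u (x - 1)) := by
    ext y
    simp only [mem_Icc, mem_insert, mem_Ioc]
    omega
  rw [hIcc]
  refine mul_card_inter_insert_le_of_lt_card hμ0 hμ1 hx (by simp only [mem_Ioc]; omega)
    (disjoint_filter.2 fun y _ hy hb => hb.not_mem hy) ?_ ?_ (W := Ioo (D.z i) x)
    (by have := hs i hi hzx hxz; simp only [Nat.card_Ioo]; omega) hgt
  · intro y hy
    simp only [pointsIn, mem_inter, mem_union, mem_filter] at hy ⊢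
    tauto
  · intro y hy
    obtain ⟨hyI, hcy, hyd, hyx, -⟩ := mem_filter.1 hy
    have hyI' := mem_Ioc.1 hyI
    have hfy : f x < f y := by
      by_contra! hle
      exact hyx (Prod.mk_le_mk.2 ⟨by omega, hle⟩)
    by_cases hzy : D.z i < y
    · exact mem_union_left _ (mem_Ioo.2 ⟨hzy, by omega⟩)
    · refine mem_union_right _ (mem_inter.2 ⟨mem_filter.2 ⟨?_, i, hi.le, by omega, by omega⟩, hyI⟩)
      simp only [pointsIn, mem_filter, mem_Ioc]
      omega

theorem exists_Icc_of_lt_ncard (hμ0 : 0 ≤ μ) (hμ1 : μ ≤ 1) {x u v : ℕ}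
    (hx : x ∈ {y ∈ pointsIn a b c d f | D.Mem (y, f y)}) (hau : a ≤ u) (hvb : v ≤ b)
    (huv : u < v) (hx_uv : u = x ∨ v = x - 1)
    (hs : ∀ i < D.m, D.z i < x → x ≤ D.z (i + 1) → D.z (i + 1) - D.z i ≤ s)
    (hgt : μ * ({y : ℕ | u < y ∧ y ≤ v ∧ c ≤ f y ∧ f y ≤ d}.ncard : ℝ) + s
      < ({y : ℕ | u < y ∧ y ≤ v ∧ c ≤ f y ∧ f y ≤ d ∧
          ¬ ((y, f y) : ℕ × ℕ) ≤ (x, f x) ∧ ¬ ((x, f x) : ℕ × ℕ) ≤ (y, f y)}.ncard : ℝ)) :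
    (∃ v, x ≤ v ∧ μ * #({y ∈ pointsIn a b c d f | D.Mem (y, f y)} ∩ Icc x v)
        ≤ (1 - μ) * #({y ∈ pointsIn a b c d f | D.BelowRight (y, f y)} ∩ Icc x v)) ∨
      ∃ u, u ≤ x ∧ μ * #({y ∈ pointsIn a b c d f | D.Mem (y, f y)} ∩ Icc u x)
        ≤ (1 - μ) * #({y ∈ pointsIn a b c d f | D.AboveLeft (y, f y)} ∩ Icc u x) := by
  simp only [ncard_setOf_Ioc] at hgt
  rcases hx_uv with rfl | rfl
  · exact Or.inl ⟨v, huv.le, mul_card_Icc_le_of_lt_card_right hμ0 hμ1 hx huv.le hvb hs hgt⟩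
  · exact Or.inr ⟨u + 1, by omega,
      mul_card_Icc_le_of_lt_card_left hμ0 hμ1 hx hau (by omega) hs hgt⟩

theorem card_belowRight_add_card_aboveLeft_le (s : Finset ℕ) :
    #{x ∈ s | D.BelowRight (x, f x)} + #{x ∈ s | D.AboveLeft (x, f x)}
      ≤ #{x ∈ s | ¬ D.Mem (x, f x)} := by
  rw [← card_union_of_disjoint (disjoint_filter.2 fun _ _ h => h.not_aboveLeft), ← filter_or]
  exact card_le_card <|
    monotone_filter_right _ fun _ _ h => h.elim BelowRight.not_mem AboveLeft.not_mem

end BoxChain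

theorem stmt4_general (a b c d : ℕ)
    (f : ℕ → ℕ) (μ : ℝ) (hμ0 : 0 < μ) (hμ1 : μ < 1)
    (m : ℕ) (z h : ℕ → ℕ)
    (hzmono : ∀ i < m, z i < z (i + 1))
    (hhcb : ∀ i ≤ m, c ≤ h i ∧ h i ≤ d) (hhmono : ∀ i < m, h i ≤ h (i + 1))
    (sw : ℕ → ℕ)
    (hsw : ∀ i < m, ∀ x, z i < x → x ≤ z (i + 1) → sw x = z (i + 1) - z i)
    (safe : ℕ → Prop)
    (hsafe : ∀ x, a < x → x ≤ b → (safe x ↔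
      ∀ u v : ℕ, a ≤ u → v ≤ b → u < v → (u = x ∨ v = x - 1) →
        (({y : ℕ | u < y ∧ y ≤ v ∧ c ≤ f y ∧ f y ≤ d ∧
            ¬ ((y, f y) : ℕ × ℕ) ≤ (x, f x) ∧ ¬ ((x, f x) : ℕ × ℕ) ≤ (y, f y)}.ncard : ℝ)
          ≤ μ * ({y : ℕ | u < y ∧ y ≤ v ∧ c ≤ f y ∧ f y ≤ d}.ncard : ℝ) + (sw x : ℝ))))
    (inD : ℕ → Prop)
    (hinD : ∀ x, inD x ↔
      ∃ i < m, z i < x ∧ x ≤ z (i + 1) ∧ h i ≤ f x ∧ f x ≤ h (i + 1)) :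
    ({x : ℕ | a < x ∧ x ≤ b ∧ inD x}.ncard : ℝ)
      ≤ (1 - μ) * ({x : ℕ | a < x ∧ x ≤ b ∧ c ≤ f x ∧ f x ≤ d}.ncard : ℝ)
        + μ * ({x : ℕ | a < x ∧ x ≤ b ∧ inD x ∧ safe x}.ncard : ℝ) := by
  classical
  let D : BoxChain :=
    ⟨m, z, h, strictMonoOn_of_lt_add_one Set.ordConnected_Iic fun i _ _ hi => hzmono i hi,
      monotoneOn_of_le_add_one Set.ordConnected_Iic fun i _ _ hi => hhmono i hi⟩
  obtain rfl : inD = fun x => D.Mem (x, f x) := funext fun x => propext (hinD x)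
  set P := pointsIn a b c d f
  have hC := D.filter_Ioc_mem_eq (a := a) (b := b) (f := f) hhcb
  simp only [ncard_setOf_Ioc]
  rw [← filter_filter (fun x => D.Mem (x, f x)) safe, hC]
  refine card_filter_le_of_mul_card_le P (fun x => D.Mem (x, f x)) safe ?_
  have hO : (#{x ∈ P | D.BelowRight (x, f x)} : ℝ) + #{x ∈ P | D.AboveLeft (x, f x)}
      ≤ #{x ∈ P | ¬ D.Mem (x, f x)} := by
    exact_mod_cast D.card_belowRight_add_card_aboveLeft_le P
  refine le_trans (mul_card_le_of_forall_exists_Icc hμ0.le (by linarith) (filter_subset _ _)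
    fun x hx => ?_) (mul_le_mul_of_nonneg_left hO (by linarith))
  obtain ⟨hxC, hxs⟩ := mem_filter.1 hx
  obtain ⟨hax, hxb⟩ := mem_Ioc.1 (mem_filter.1 (mem_filter.1 hxC).1).1
  rw [hsafe x hax hxb] at hxs
  push Not at hxs
  obtain ⟨u, v, hau, hvb, huv, hx_uv, hgt⟩ := hxs
  exact D.exists_Icc_of_lt_ncard hμ0.le hμ1.le hxC hau hvb huv hx_uv
    (fun i hi h1 h2 => (hsw i hi x h1 h2).ge) hgt

/-- Dichotomy lemma, corollary form.  `R` is the box with index interval `(a,b]` and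
value interval `[c,d]`; the strip decomposition is given by `z 0 = a < z 1 < ⋯ < z m = b`;
`f` is the array, `F(x) = (x, f x)`; `sw x` is the width of the strip containing `x`;
`safe x` says every substrip of `R` adjacent to `x` contains at most
`μ·|F ∩ S| + sw x` points of `F` incomparable with `F(x)`; `inD x` says `F(x)` lies in
the compatible box chain determined by the nondecreasing heights `h i` (box `i` being
`(z i, z (i+1)] × [h i, h (i+1)]`).  Then `χ^in ≤ (1-μ)·χ + μ·|S|`. -/
theorem stmt4 (a b c d : ℕ) (hab : a < b) (hcd : c ≤ d)
    (f : ℕ → ℕ) (μ : ℝ) (hμ0 : 0 < μ) (hμ1 : μ < 1)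
    (m : ℕ) (hm : 0 < m) (z h : ℕ → ℕ)
    (hz0 : z 0 = a) (hzm : z m = b) (hzmono : ∀ i < m, z i < z (i + 1))
    (hhcb : ∀ i ≤ m, c ≤ h i ∧ h i ≤ d) (hhmono : ∀ i < m, h i ≤ h (i + 1))
    (sw : ℕ → ℕ)
    (hsw : ∀ i < m, ∀ x, z i < x → x ≤ z (i + 1) → sw x = z (i + 1) - z i)
    (safe : ℕ → Prop)
    (hsafe : ∀ x, a < x → x ≤ b → (safe x ↔
      ∀ u v : ℕ, a ≤ u → v ≤ b → u < v → (u = x ∨ v = x - 1) →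
        (({y : ℕ | u < y ∧ y ≤ v ∧ c ≤ f y ∧ f y ≤ d ∧
            ¬ ((y, f y) : ℕ × ℕ) ≤ (x, f x) ∧ ¬ ((x, f x) : ℕ × ℕ) ≤ (y, f y)}.ncard : ℝ)
          ≤ μ * ({y : ℕ | u < y ∧ y ≤ v ∧ c ≤ f y ∧ f y ≤ d}.ncard : ℝ) + (sw x : ℝ))))
    (inD : ℕ → Prop)
    (hinD : ∀ x, inD x ↔
      ∃ i < m, z i < x ∧ x ≤ z (i + 1) ∧ h i ≤ f x ∧ f x ≤ h (i + 1)) :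
    ({x : ℕ | a < x ∧ x ≤ b ∧ inD x}.ncard : ℝ)
      ≤ (1 - μ) * ({x : ℕ | a < x ∧ x ≤ b ∧ c ≤ f x ∧ f x ≤ d}.ncard : ℝ)
        + μ * ({x : ℕ | a < x ∧ x ≤ b ∧ inD x ∧ safe x}.ncard : ℝ) :=
  stmt4_general a b c d f μ hμ0 hμ1 m z h hzmono hhcb hhmono sw hsw safe hsafe inD hinD
end

section
/- (Dichotomy lemma, unsafe-point form) Under the same setup as the dichotomy lemma, letting U be the set of unsafe indices x with F(x) ∈ D⃗^∪ and χ^{out} = |R ∩ F| − |D⃗^∪ ∩ F| the number of F-points of R outside the chain, we have χ^{out} ≥ (μ/(1−μ))·|U|. -/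
-- auxiliary lemmas ------------------------------------------------------

lemma exists_strip (z : ℕ → ℕ) : ∀ m x, z 0 < x → x ≤ z m → ∃ i, i < m ∧ z i < x ∧ x ≤ z (i+1) := by
  intro m
  induction m with
  | zero => intro x h1 h2; omega
  | succ n ih =>
    intro x h1 h2
    by_cases hx : x ≤ z n
    · obtain ⟨i, hi, h3, h4⟩ := ih x h1 hx
      exact ⟨i, by omega, h3, h4⟩
    · exact ⟨n, by omega, by omega, h2⟩

def stripIdx (z : ℕ → ℕ) (m x : ℕ) : ℕ := Nat.findGreatest (fun i => z i < x) m

lemma stripIdx_spec (z : ℕ → ℕ) (m x : ℕ) (h0 : z 0 < x) (hxm : x ≤ z m) :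
    stripIdx z m x < m ∧ z (stripIdx z m x) < x ∧ x ≤ z (stripIdx z m x + 1) := by
  have hspec : z (stripIdx z m x) < x :=
    Nat.findGreatest_spec (P := fun i => z i < x) (Nat.zero_le m) h0
  have hle : stripIdx z m x ≤ m := Nat.findGreatest_le m
  have hne : stripIdx z m x ≠ m := by
    intro hEq
    have : z m < x := by rw [← hEq]; exact hspec
    omega
  have hlt : stripIdx z m x < m := lt_of_le_of_ne hle hne
  have hgt : ¬ (z (stripIdx z m x + 1) < x) :=
    Nat.findGreatest_is_greatest (P := fun i => z i < x) (Nat.lt_succ_self _)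
      (by omega : stripIdx z m x + 1 ≤ m)
  exact ⟨hlt, hspec, by omega⟩

lemma ncard_Ioc_nat (p q : ℕ) : (Set.Ioc p q).ncard = q - p := by
  rw [← Finset.coe_Ioc, Set.ncard_coe_finset, Nat.card_Ioc]

lemma two_disj {s t u : Set ℕ} {p q : ℕ} (hu : u ⊆ Set.Ioc p q) (hs : s ⊆ u) (ht : t ⊆ u)
    (hd : Disjoint s t) : s.ncard + t.ncard ≤ u.ncard := by
  have huf : u.Finite := (Set.finite_Ioc p q).subset hu
  rw [← Set.ncard_union_eq hd (huf.subset hs) (huf.subset ht)]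
  exact Set.ncard_le_ncard (Set.union_subset hs ht) huf

lemma cov_card {s t u : Set ℕ} {p q p' q' : ℕ} (ht : t ⊆ Set.Ioc p q) (hu : u ⊆ Set.Ioc p' q')
    (hsub : s ⊆ t ∪ u) : s.ncard ≤ t.ncard + u.ncard :=
  le_trans (Set.ncard_le_ncard hsub (((Set.finite_Ioc p q).subset ht).union
    ((Set.finite_Ioc p' q').subset hu))) (Set.ncard_union_le t u)

set_option maxHeartbeats 1000000 in
/-- Dichotomy lemma, unsafe-point form.  `R` is the box with index interval `(a,b]` and
value interval `[c,d]`; the strip decomposition is given by `z 0 = a < z 1 < ⋯ < z m = b`;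
`f` is the array, `F(x) = (x, f x)`; `sw x` is the width of the strip containing `x`;
`safe x` says every substrip of `R` adjacent to `x` contains at most
`μ·|F ∩ S| + sw x` points of `F` incomparable with `F(x)`; `inD x` says `F(x)` lies in
the compatible box chain determined by the nondecreasing heights `h i` (box `i` being
`(z i, z (i+1)] × [h i, h (i+1)]`).  Then `χ^out ≥ (μ/(1-μ))·|U|` where `U` is the set of unsafe chain indices and `χ^out = χ - χ^in`. -/
theorem stmt5 (a b c d : ℕ) (hab : a < b) (hcd : c ≤ d)
    (f : ℕ → ℕ) (μ : ℝ) (hμ0 : 0 < μ) (hμ1 : μ < 1)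
    (m : ℕ) (hm : 0 < m) (z h : ℕ → ℕ)
    (hz0 : z 0 = a) (hzm : z m = b) (hzmono : ∀ i < m, z i < z (i + 1))
    (hhcb : ∀ i ≤ m, c ≤ h i ∧ h i ≤ d) (hhmono : ∀ i < m, h i ≤ h (i + 1))
    (sw : ℕ → ℕ)
    (hsw : ∀ i < m, ∀ x, z i < x → x ≤ z (i + 1) → sw x = z (i + 1) - z i)
    (safe : ℕ → Prop)
    (hsafe : ∀ x, a < x → x ≤ b → (safe x ↔
      ∀ u v : ℕ, a ≤ u → v ≤ b → u < v → (u = x ∨ v = x - 1) →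
        (({y : ℕ | u < y ∧ y ≤ v ∧ c ≤ f y ∧ f y ≤ d ∧
            ¬ ((y, f y) : ℕ × ℕ) ≤ (x, f x) ∧ ¬ ((x, f x) : ℕ × ℕ) ≤ (y, f y)}.ncard : ℝ)
          ≤ μ * ({y : ℕ | u < y ∧ y ≤ v ∧ c ≤ f y ∧ f y ≤ d}.ncard : ℝ) + (sw x : ℝ))))
    (inD : ℕ → Prop)
    (hinD : ∀ x, inD x ↔
      ∃ i < m, z i < x ∧ x ≤ z (i + 1) ∧ h i ≤ f x ∧ f x ≤ h (i + 1)) :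
    μ / (1 - μ) * ({x : ℕ | a < x ∧ x ≤ b ∧ inD x ∧ ¬ safe x}.ncard : ℝ)
      ≤ ({x : ℕ | a < x ∧ x ≤ b ∧ c ≤ f x ∧ f x ≤ d}.ncard : ℝ)
        - ({x : ℕ | a < x ∧ x ≤ b ∧ inD x}.ncard : ℝ) := by
  set FRs : Set ℕ := {x : ℕ | a < x ∧ x ≤ b ∧ c ≤ f x ∧ f x ≤ d} with hFRs
  set Cs : Set ℕ := {x : ℕ | a < x ∧ x ≤ b ∧ inD x} with hCs
  set Us : Set ℕ := {x : ℕ | a < x ∧ x ≤ b ∧ inD x ∧ ¬ safe x} with hUs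
  have hμ' : (0:ℝ) < 1 - μ := by linarith
  have hlam : 0 ≤ μ / (1 - μ) := le_of_lt (div_pos hμ0 hμ')
  have hzle : ∀ i j, i ≤ j → j ≤ m → z i ≤ z j := by
    intro i j hij
    induction j, hij using Nat.le_induction with
    | base => intro _; exact le_rfl
    | succ j hij ih =>
      intro hjm
      exact le_trans (ih (by omega)) (le_of_lt (hzmono j (by omega)))
  have hhle : ∀ i j, i ≤ j → j ≤ m → h i ≤ h j := by
    intro i j hij
    induction j, hij using Nat.le_induction with
    | base => intro _; exact le_rfl
    | succ j hij ih =>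
      intro hjm
      exact le_trans (ih (by omega)) (hhmono j (by omega))
  have hidx : ∀ x, a < x → x ≤ b →
      stripIdx z m x < m ∧ z (stripIdx z m x) < x ∧ x ≤ z (stripIdx z m x + 1) := by
    intro x hax hxb
    exact stripIdx_spec z m x (by omega) (by omega)
  have hidxu : ∀ x i, i < m → z i < x → x ≤ z (i+1) → stripIdx z m x = i := by
    intro x i him h1 h2
    have hax : a < x := by have := hzle 0 i (Nat.zero_le i) (le_of_lt him); omega
    have hxb : x ≤ b := by have := hzle (i+1) m (by omega) le_rfl; omega
    obtain ⟨hj, hj1, hj2⟩ := hidx x hax hxb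
    rcases Nat.lt_trichotomy (stripIdx z m x) i with hlt | heq | hgt
    · have := hzle (stripIdx z m x + 1) i (by omega) (le_of_lt him); omega
    · exact heq
    · have := hzle (i+1) (stripIdx z m x) (by omega) (le_of_lt hj); omega
  have hCidx : ∀ x ∈ Cs, h (stripIdx z m x) ≤ f x ∧ f x ≤ h (stripIdx z m x + 1) ∧
      stripIdx z m x < m ∧ z (stripIdx z m x) < x ∧ x ≤ z (stripIdx z m x + 1) := by
    intro x hx
    obtain ⟨hax, hxb, hD⟩ := hx
    obtain ⟨i, him, h1, h2, h3, h4⟩ := (hinD x).mp hD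
    have hi := hidxu x i him h1 h2
    rw [hi]
    exact ⟨h3, h4, him, h1, h2⟩
  have hCF : Cs ⊆ FRs := by
    intro x hx
    obtain ⟨hax, hxb, hD⟩ := hx
    obtain ⟨i, him, h1, h2, h3, h4⟩ := (hinD x).mp hD
    exact ⟨hax, hxb, le_trans (hhcb i (le_of_lt him)).1 h3,
      le_trans h4 (hhcb (i+1) (by omega)).2⟩
  set Outd : Set ℕ := {y : ℕ | y ∈ FRs ∧ f y < h (stripIdx z m y)} with hOutd
  set Outu : Set ℕ := {y : ℕ | y ∈ FRs ∧ h (stripIdx z m y + 1) < f y} with hOutu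
  have hOdC : ∀ y, y ∈ Outd → y ∉ Cs := by
    intro y hy hyC
    have h1 := (hCidx y hyC).1
    have h2 := hy.2
    omega
  have hOuC : ∀ y, y ∈ Outu → y ∉ Cs := by
    intro y hy hyC
    have h1 := (hCidx y hyC).2.1
    have h2 := hy.2
    omega
  set URs : Set ℕ := {x : ℕ | x ∈ Cs ∧ ∃ v, x < v ∧ v ≤ b ∧
      μ * ({y : ℕ | x < y ∧ y ≤ v ∧ c ≤ f y ∧ f y ≤ d}.ncard : ℝ) + (sw x : ℝ) <
      ({y : ℕ | x < y ∧ y ≤ v ∧ c ≤ f y ∧ f y ≤ d ∧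
          ¬ ((y, f y) : ℕ × ℕ) ≤ (x, f x) ∧ ¬ ((x, f x) : ℕ × ℕ) ≤ (y, f y)}.ncard : ℝ)} with hURs
  set ULs : Set ℕ := {x : ℕ | x ∈ Cs ∧ ∃ u, a ≤ u ∧ u < x - 1 ∧
      μ * ({y : ℕ | u < y ∧ y ≤ x - 1 ∧ c ≤ f y ∧ f y ≤ d}.ncard : ℝ) + (sw x : ℝ) <
      ({y : ℕ | u < y ∧ y ≤ x - 1 ∧ c ≤ f y ∧ f y ≤ d ∧
          ¬ ((y, f y) : ℕ × ℕ) ≤ (x, f x) ∧ ¬ ((x, f x) : ℕ × ℕ) ≤ (y, f y)}.ncard : ℝ)} with hULs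
  have hUsplit : Us ⊆ URs ∪ ULs := by
    intro x hx
    obtain ⟨hax, hxb, hD, hns⟩ := hx
    have hnP : ¬ ∀ u v : ℕ, a ≤ u → v ≤ b → u < v → (u = x ∨ v = x - 1) →
        (({y : ℕ | u < y ∧ y ≤ v ∧ c ≤ f y ∧ f y ≤ d ∧
            ¬ ((y, f y) : ℕ × ℕ) ≤ (x, f x) ∧ ¬ ((x, f x) : ℕ × ℕ) ≤ (y, f y)}.ncard : ℝ)
          ≤ μ * ({y : ℕ | u < y ∧ y ≤ v ∧ c ≤ f y ∧ f y ≤ d}.ncard : ℝ) + (sw x : ℝ)) :=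
      fun hP => hns ((hsafe x hax hxb).mpr hP)
    push_neg at hnP
    obtain ⟨u, v, hau, hvb, huv, hor, hviol⟩ := hnP
    rcases hor with rfl | rfl
    · exact Or.inl ⟨⟨hax, hxb, hD⟩, v, huv, hvb, hviol⟩
    · exact Or.inr ⟨⟨hax, hxb, hD⟩, u, hau, huv, hviol⟩
  -- key right-witness lemma
  have keyR : ∀ x, x ∈ URs → ∃ v, z (stripIdx z m x + 1) < v ∧ v ≤ b ∧
      μ / (1 - μ) * ((Cs ∩ Set.Ioc (z (stripIdx z m x)) v).ncard : ℝ) <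
      ((Outd ∩ Set.Ioc (z (stripIdx z m x + 1)) v).ncard : ℝ) := by
    rintro x ⟨hxC, v, hxv, hvb, hviol⟩
    obtain ⟨hfx1, hfx2, him, hzx1, hzx2⟩ := hCidx x hxC
    have hax : a < x := hxC.1
    have hxb : x ≤ b := hxC.2.1
    set i := stripIdx z m x with hidef
    have hswx : sw x = z (i + 1) - z i := hsw i him x hzx1 hzx2
    set TS : Set ℕ := {y : ℕ | x < y ∧ y ≤ v ∧ c ≤ f y ∧ f y ≤ d} with hTS
    set AS : Set ℕ := {y : ℕ | x < y ∧ y ≤ v ∧ c ≤ f y ∧ f y ≤ d ∧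
        ¬ ((y, f y) : ℕ × ℕ) ≤ (x, f x) ∧ ¬ ((x, f x) : ℕ × ℕ) ≤ (y, f y)} with hAS
    have hATsub : AS ⊆ TS := fun y hy => ⟨hy.1, hy.2.1, hy.2.2.1, hy.2.2.2.1⟩
    have hTfin : TS.Finite := (Set.finite_Ioc x v).subset (fun y hy => ⟨hy.1, hy.2.1⟩)
    have hvz : z (i + 1) < v := by
      by_contra hcon
      push_neg at hcon
      have hTIoc : TS ⊆ Set.Ioc (z i) (z (i + 1)) := fun y hy =>
        ⟨lt_trans hzx1 hy.1, le_trans hy.2.1 hcon⟩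
      have hxIoc : ({x} : Set ℕ) ⊆ Set.Ioc (z i) (z (i + 1)) := by
        intro y hy; rw [Set.mem_singleton_iff] at hy; subst hy; exact ⟨hzx1, hzx2⟩
      have hdisj : Disjoint TS ({x} : Set ℕ) := by
        rw [Set.disjoint_right]
        intro y hy hyT
        rw [Set.mem_singleton_iff] at hy
        rw [hy] at hyT
        exact lt_irrefl x hyT.1
      have hT1 : TS.ncard + ({x} : Set ℕ).ncard ≤ (Set.Ioc (z i) (z (i + 1))).ncard :=
        two_disj subset_rfl hTIoc hxIoc hdisj
      rw [ncard_Ioc_nat, Set.ncard_singleton] at hT1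
      have hAT : AS.ncard ≤ TS.ncard := Set.ncard_le_ncard hATsub hTfin
      have r1 : (AS.ncard : ℝ) ≤ (TS.ncard : ℝ) := by exact_mod_cast hAT
      have r2 : (TS.ncard : ℝ) + 1 ≤ (sw x : ℝ) := by
        have : TS.ncard + 1 ≤ sw x := by omega
        exact_mod_cast this
      have hmt : (0:ℝ) ≤ μ * (TS.ncard : ℝ) := mul_nonneg (le_of_lt hμ0) (Nat.cast_nonneg _)
      linarith
    refine ⟨v, hvz, hvb, ?_⟩
    set BS : Set ℕ := Outd ∩ Set.Ioc (z (i + 1)) v with hBS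
    set KS : Set ℕ := Cs ∩ Set.Ioc (z i) v with hKS
    set MS : Set ℕ := FRs ∩ Set.Ioc (z i) v with hMS
    set ASt : Set ℕ := AS ∩ Set.Ioc (z i) (z (i + 1)) with hASt
    set ZL : Set ℕ := FRs ∩ Set.Ioc (z i) x with hZL
    have hAsub : AS ⊆ BS ∪ ASt := by
      intro y hy
      obtain ⟨h1, h2, h3, h4, h5, h6⟩ := hy
      by_cases hyz : y ≤ z (i + 1)
      · exact Or.inr ⟨⟨h1, h2, h3, h4, h5, h6⟩, lt_trans hzx1 h1, hyz⟩
      · push_neg at hyz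
        have hay : a < y := lt_trans hax h1
        have hyb : y ≤ b := le_trans h2 hvb
        obtain ⟨hjm, hj1, hj2⟩ := hidx y hay hyb
        have hij : i + 1 ≤ stripIdx z m y := by
          by_contra hcon2
          push_neg at hcon2
          have := hzle (stripIdx z m y + 1) (i + 1) (by omega) (by omega)
          omega
        have hfy : f y < f x := by
          rw [Prod.mk_le_mk] at h6
          push_neg at h6
          exact h6 (le_of_lt h1)
        have hfh : f y < h (stripIdx z m y) :=
          lt_of_lt_of_le hfy (le_trans hfx2 (hhle (i + 1) (stripIdx z m y) hij (le_of_lt hjm)))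
        exact Or.inl ⟨⟨⟨hay, hyb, h3, h4⟩, hfh⟩, hyz, h2⟩
    have n1 : AS.ncard ≤ BS.ncard + ASt.ncard :=
      cov_card Set.inter_subset_right Set.inter_subset_right hAsub
    have n2 : ASt.ncard + ZL.ncard ≤ sw x := by
      have hA1 : ASt ⊆ Set.Ioc (z i) (z (i + 1)) := Set.inter_subset_right
      have hZ1 : ZL ⊆ Set.Ioc (z i) (z (i + 1)) := fun y hy =>
        ⟨hy.2.1, le_trans hy.2.2 hzx2⟩
      have hdisj : Disjoint ASt ZL := by
        rw [Set.disjoint_left]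
        intro y hy hy2
        have h1 := hy.1.1
        have h2 := hy2.2.2
        omega
      have := two_disj subset_rfl hA1 hZ1 hdisj
      rw [ncard_Ioc_nat] at this
      omega
    have n3 : MS.ncard ≤ TS.ncard + ZL.ncard := by
      refine cov_card (fun y hy => ⟨hy.1, hy.2.1⟩ : TS ⊆ Set.Ioc x v)
        Set.inter_subset_right ?_
      intro y hy
      obtain ⟨⟨hay, hyb, hc1, hc2⟩, hy1, hy2⟩ := hy
      by_cases hyx : y ≤ x
      · exact Or.inr ⟨⟨hay, hyb, hc1, hc2⟩, hy1, hyx⟩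
      · push_neg at hyx
        exact Or.inl ⟨hyx, hy2, hc1, hc2⟩
    have n4 : KS.ncard + BS.ncard ≤ MS.ncard := by
      have hK1 : KS ⊆ MS := fun y hy => ⟨hCF hy.1, hy.2⟩
      have hB1 : BS ⊆ MS := fun y hy =>
        ⟨hy.1.1, lt_of_le_of_lt (hzle i (i+1) (Nat.le_succ i) (by omega)) hy.2.1, hy.2.2⟩
      have hdisj : Disjoint KS BS := by
        rw [Set.disjoint_left]
        intro y hy hy2
        exact hOdC y hy2.1 hy.1
      exact two_disj (Set.inter_subset_right : MS ⊆ Set.Ioc (z i) v) hK1 hB1 hdisj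
    have r1 : (AS.ncard : ℝ) ≤ (BS.ncard : ℝ) + (ASt.ncard : ℝ) := by exact_mod_cast n1
    have r2 : (ASt.ncard : ℝ) + (ZL.ncard : ℝ) ≤ (sw x : ℝ) := by exact_mod_cast n2
    have r3 : (MS.ncard : ℝ) ≤ (TS.ncard : ℝ) + (ZL.ncard : ℝ) := by exact_mod_cast n3
    have r4 : (KS.ncard : ℝ) + (BS.ncard : ℝ) ≤ (MS.ncard : ℝ) := by exact_mod_cast n4
    have e1 : μ * (ZL.ncard : ℝ) ≤ (ZL.ncard : ℝ) := by
      have := mul_le_of_le_one_left (Nat.cast_nonneg (α := ℝ) ZL.ncard) (le_of_lt hμ1)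
      linarith
    have e2 : μ * ((KS.ncard : ℝ) + (BS.ncard : ℝ)) ≤ μ * (MS.ncard : ℝ) :=
      mul_le_mul_of_nonneg_left r4 (le_of_lt hμ0)
    have e3 : μ * (MS.ncard : ℝ) ≤ μ * ((TS.ncard : ℝ) + (ZL.ncard : ℝ)) :=
      mul_le_mul_of_nonneg_left r3 (le_of_lt hμ0)
    rw [div_mul_eq_mul_div, div_lt_iff₀ hμ']
    nlinarith [hviol, r1, r2, e1, e2, e3]
  -- key left-witness lemma
  have keyL : ∀ x, x ∈ ULs → ∃ u, a ≤ u ∧ u < z (stripIdx z m x) ∧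
      μ / (1 - μ) * ((Cs ∩ Set.Ioc u (z (stripIdx z m x + 1))).ncard : ℝ) <
      ((Outu ∩ Set.Ioc u (z (stripIdx z m x))).ncard : ℝ) := by
    rintro x ⟨hxC, u, hau, hux, hviol⟩
    obtain ⟨hfx1, hfx2, him, hzx1, hzx2⟩ := hCidx x hxC
    have hax : a < x := hxC.1
    have hxb : x ≤ b := hxC.2.1
    set i := stripIdx z m x with hidef
    have hswx : sw x = z (i + 1) - z i := hsw i him x hzx1 hzx2
    set TS : Set ℕ := {y : ℕ | u < y ∧ y ≤ x - 1 ∧ c ≤ f y ∧ f y ≤ d} with hTS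
    set AS : Set ℕ := {y : ℕ | u < y ∧ y ≤ x - 1 ∧ c ≤ f y ∧ f y ≤ d ∧
        ¬ ((y, f y) : ℕ × ℕ) ≤ (x, f x) ∧ ¬ ((x, f x) : ℕ × ℕ) ≤ (y, f y)} with hAS
    have hATsub : AS ⊆ TS := fun y hy => ⟨hy.1, hy.2.1, hy.2.2.1, hy.2.2.2.1⟩
    have hTfin : TS.Finite := (Set.finite_Ioc u (x-1)).subset (fun y hy => ⟨hy.1, hy.2.1⟩)
    have huz : u < z i := by
      by_contra hcon
      push_neg at hcon
      have hTIoc : TS ⊆ Set.Ioc (z i) (z (i + 1)) := fun y hy =>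
        ⟨lt_of_le_of_lt hcon hy.1, by have h1 := hy.2.1; omega⟩
      have hxIoc : ({x} : Set ℕ) ⊆ Set.Ioc (z i) (z (i + 1)) := by
        intro y hy; rw [Set.mem_singleton_iff] at hy; subst hy; exact ⟨hzx1, hzx2⟩
      have hdisj : Disjoint TS ({x} : Set ℕ) := by
        rw [Set.disjoint_right]
        intro y hy hyT
        rw [Set.mem_singleton_iff] at hy
        rw [hy] at hyT
        have := hyT.2.1
        omega
      have hT1 : TS.ncard + ({x} : Set ℕ).ncard ≤ (Set.Ioc (z i) (z (i + 1))).ncard :=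
        two_disj subset_rfl hTIoc hxIoc hdisj
      rw [ncard_Ioc_nat, Set.ncard_singleton] at hT1
      have hAT : AS.ncard ≤ TS.ncard := Set.ncard_le_ncard hATsub hTfin
      have r1 : (AS.ncard : ℝ) ≤ (TS.ncard : ℝ) := by exact_mod_cast hAT
      have r2 : (TS.ncard : ℝ) + 1 ≤ (sw x : ℝ) := by
        have : TS.ncard + 1 ≤ sw x := by omega
        exact_mod_cast this
      have hmt : (0:ℝ) ≤ μ * (TS.ncard : ℝ) := mul_nonneg (le_of_lt hμ0) (Nat.cast_nonneg _)
      linarith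
    refine ⟨u, hau, huz, ?_⟩
    set BS : Set ℕ := Outu ∩ Set.Ioc u (z i) with hBS
    set KS : Set ℕ := Cs ∩ Set.Ioc u (z (i + 1)) with hKS
    set MS : Set ℕ := FRs ∩ Set.Ioc u (z (i + 1)) with hMS
    set ASt : Set ℕ := AS ∩ Set.Ioc (z i) (z (i + 1)) with hASt
    set ZR : Set ℕ := FRs ∩ Set.Ioc (x - 1) (z (i + 1)) with hZR
    have hAsub : AS ⊆ BS ∪ ASt := by
      intro y hy
      obtain ⟨h1, h2, h3, h4, h5, h6⟩ := hy
      have hyx : y < x := by omega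
      by_cases hyz : z i < y
      · exact Or.inr ⟨⟨h1, h2, h3, h4, h5, h6⟩, hyz, by omega⟩
      · push_neg at hyz
        have hay : a < y := lt_of_le_of_lt hau h1
        have hyb : y ≤ b := by omega
        obtain ⟨hjm, hj1, hj2⟩ := hidx y hay hyb
        have hij : stripIdx z m y + 1 ≤ i := by
          by_contra hcon2
          push_neg at hcon2
          have := hzle i (stripIdx z m y) (by omega) (le_of_lt hjm)
          omega
        have hfy : f x < f y := by
          rw [Prod.mk_le_mk] at h5
          push_neg at h5
          exact h5 (le_of_lt hyx)
        have hfh : h (stripIdx z m y + 1) < f y :=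
          lt_of_le_of_lt (le_trans (hhle (stripIdx z m y + 1) i hij (le_of_lt him)) hfx1) hfy
        exact Or.inl ⟨⟨⟨hay, hyb, h3, h4⟩, hfh⟩, h1, hyz⟩
    have n1 : AS.ncard ≤ BS.ncard + ASt.ncard :=
      cov_card Set.inter_subset_right Set.inter_subset_right hAsub
    have n2 : ASt.ncard + ZR.ncard ≤ sw x := by
      have hA1 : ASt ⊆ Set.Ioc (z i) (z (i + 1)) := Set.inter_subset_right
      have hZ1 : ZR ⊆ Set.Ioc (z i) (z (i + 1)) := fun y hy =>
        ⟨by have h1 := hy.2.1; omega, hy.2.2⟩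
      have hdisj : Disjoint ASt ZR := by
        rw [Set.disjoint_left]
        intro y hy hy2
        have h1 := hy.1.2.1
        have h2 := hy2.2.1
        omega
      have := two_disj subset_rfl hA1 hZ1 hdisj
      rw [ncard_Ioc_nat] at this
      omega
    have n3 : MS.ncard ≤ TS.ncard + ZR.ncard := by
      refine cov_card (fun y hy => ⟨hy.1, hy.2.1⟩ : TS ⊆ Set.Ioc u (x-1))
        Set.inter_subset_right ?_
      intro y hy
      obtain ⟨⟨hay, hyb, hc1, hc2⟩, hy1, hy2⟩ := hy
      by_cases hyx : y ≤ x - 1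
      · exact Or.inl ⟨hy1, hyx, hc1, hc2⟩
      · push_neg at hyx
        exact Or.inr ⟨⟨hay, hyb, hc1, hc2⟩, hyx, hy2⟩
    have n4 : KS.ncard + BS.ncard ≤ MS.ncard := by
      have hK1 : KS ⊆ MS := fun y hy => ⟨hCF hy.1, hy.2⟩
      have hB1 : BS ⊆ MS := fun y hy =>
        ⟨hy.1.1, hy.2.1, le_trans hy.2.2 (hzle i (i+1) (Nat.le_succ i) (by omega))⟩
      have hdisj : Disjoint KS BS := by
        rw [Set.disjoint_left]
        intro y hy hy2
        exact hOuC y hy2.1 hy.1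
      exact two_disj (Set.inter_subset_right : MS ⊆ Set.Ioc u (z (i+1))) hK1 hB1 hdisj
    have r1 : (AS.ncard : ℝ) ≤ (BS.ncard : ℝ) + (ASt.ncard : ℝ) := by exact_mod_cast n1
    have r2 : (ASt.ncard : ℝ) + (ZR.ncard : ℝ) ≤ (sw x : ℝ) := by exact_mod_cast n2
    have r3 : (MS.ncard : ℝ) ≤ (TS.ncard : ℝ) + (ZR.ncard : ℝ) := by exact_mod_cast n3
    have r4 : (KS.ncard : ℝ) + (BS.ncard : ℝ) ≤ (MS.ncard : ℝ) := by exact_mod_cast n4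
    have e1 : μ * (ZR.ncard : ℝ) ≤ (ZR.ncard : ℝ) := by
      have := mul_le_of_le_one_left (Nat.cast_nonneg (α := ℝ) ZR.ncard) (le_of_lt hμ1)
      linarith
    have e2 : μ * ((KS.ncard : ℝ) + (BS.ncard : ℝ)) ≤ μ * (MS.ncard : ℝ) :=
      mul_le_mul_of_nonneg_left r4 (le_of_lt hμ0)
    have e3 : μ * (MS.ncard : ℝ) ≤ μ * ((TS.ncard : ℝ) + (ZR.ncard : ℝ)) :=
      mul_le_mul_of_nonneg_left r3 (le_of_lt hμ0)
    rw [div_mul_eq_mul_div, div_lt_iff₀ hμ']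
    nlinarith [hviol, r1, r2, e1, e2, e3]
  have hURIoc : URs ⊆ Set.Ioc a b := fun x hx => ⟨hx.1.1, hx.1.2.1⟩
  have hULIoc : ULs ⊆ Set.Ioc a b := fun x hx => ⟨hx.1.1, hx.1.2.1⟩
  -- right induction
  have indR : ∀ n t, b ≤ t + n →
      μ / (1 - μ) * ((URs ∩ Set.Ioc t b).ncard : ℝ) ≤ ((Outd ∩ Set.Ioc t b).ncard : ℝ) := by
    intro n
    induction n with
    | zero =>
      intro t ht
      have hempty : Set.Ioc t b = (∅ : Set ℕ) := Set.Ioc_eq_empty (by omega)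
      rw [hempty]
      simp
    | succ n ih =>
      intro t ht
      rcases Set.eq_empty_or_nonempty (URs ∩ Set.Ioc t b) with hE | hne
      · rw [hE]
        simp
      · obtain ⟨x₀, hx₀, hminx⟩ := Set.exists_min_image _ (fun y => stripIdx z m y)
          ((Set.finite_Ioc t b).subset Set.inter_subset_right) hne
        obtain ⟨v, hv1, hv2, hkey⟩ := keyR x₀ hx₀.1
        obtain ⟨hh1, hh2, him, hz1, hz2⟩ := hCidx x₀ hx₀.1.1
        have htx : t < x₀ := hx₀.2.1
        have htv : t < v := by omega
        have cov : (URs ∩ Set.Ioc t b) ⊆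
            (Cs ∩ Set.Ioc (z (stripIdx z m x₀)) v) ∪ (URs ∩ Set.Ioc v b) := by
          rintro y ⟨hyU, hyt, hyb⟩
          by_cases hyv : y ≤ v
          · refine Or.inl ⟨hyU.1, ?_, hyv⟩
            have h1 : stripIdx z m x₀ ≤ stripIdx z m y := hminx y ⟨hyU, hyt, hyb⟩
            have h2 := hzle (stripIdx z m x₀) (stripIdx z m y) h1
              (le_of_lt (hCidx y hyU.1).2.2.1)
            have h3 := (hCidx y hyU.1).2.2.2.1
            omega
          · exact Or.inr ⟨hyU, by omega, hyb⟩
        have cA : (URs ∩ Set.Ioc t b).ncard ≤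
            (Cs ∩ Set.Ioc (z (stripIdx z m x₀)) v).ncard + (URs ∩ Set.Ioc v b).ncard :=
          cov_card Set.inter_subset_right Set.inter_subset_right cov
        have cB : (Outd ∩ Set.Ioc (z (stripIdx z m x₀ + 1)) v).ncard
            + (Outd ∩ Set.Ioc v b).ncard ≤ (Outd ∩ Set.Ioc t b).ncard := by
          refine two_disj (Set.inter_subset_right : Outd ∩ Set.Ioc t b ⊆ Set.Ioc t b)
            ?_ ?_ ?_
          · intro y hy
            exact ⟨hy.1, by have := hy.2.1; omega, le_trans hy.2.2 hv2⟩
          · intro y hy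
            exact ⟨hy.1, by have := hy.2.1; omega, hy.2.2⟩
          · rw [Set.disjoint_left]
            intro y hy hy2
            have h1 := hy.2.2
            have h2 := hy2.2.1
            omega
        have ihv := ih v (by omega)
        have rA : ((URs ∩ Set.Ioc t b).ncard : ℝ) ≤
            ((Cs ∩ Set.Ioc (z (stripIdx z m x₀)) v).ncard : ℝ)
            + ((URs ∩ Set.Ioc v b).ncard : ℝ) := by exact_mod_cast cA
        have rB : ((Outd ∩ Set.Ioc (z (stripIdx z m x₀ + 1)) v).ncard : ℝ)
            + ((Outd ∩ Set.Ioc v b).ncard : ℝ) ≤ ((Outd ∩ Set.Ioc t b).ncard : ℝ) := by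
          exact_mod_cast cB
        have eA := mul_le_mul_of_nonneg_left rA hlam
        linarith
  -- left induction
  have indL : ∀ t,
      μ / (1 - μ) * ((ULs ∩ Set.Ioc a t).ncard : ℝ) ≤ ((Outu ∩ Set.Ioc a t).ncard : ℝ) := by
    intro t
    induction t using Nat.strong_induction_on with
    | _ t ih =>
      rcases Set.eq_empty_or_nonempty (ULs ∩ Set.Ioc a t) with hE | hne
      · rw [hE]
        simp
      · obtain ⟨x₀, hx₀, hmaxx⟩ := Set.exists_max_image _ (fun y => stripIdx z m y)
          ((Set.finite_Ioc a t).subset Set.inter_subset_right) hne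
        obtain ⟨u, hu1, hu2, hkey⟩ := keyL x₀ hx₀.1
        obtain ⟨hh1, hh2, him, hz1, hz2⟩ := hCidx x₀ hx₀.1.1
        have hxt : x₀ ≤ t := hx₀.2.2
        have hut : u < t := by omega
        have cov : (ULs ∩ Set.Ioc a t) ⊆
            (Cs ∩ Set.Ioc u (z (stripIdx z m x₀ + 1))) ∪ (ULs ∩ Set.Ioc a u) := by
          rintro y ⟨hyU, hya, hyt⟩
          by_cases hyu : u < y
          · refine Or.inl ⟨hyU.1, hyu, ?_⟩
            have h1 : stripIdx z m y ≤ stripIdx z m x₀ := hmaxx y ⟨hyU, hya, hyt⟩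
            have h2 := hzle (stripIdx z m y + 1) (stripIdx z m x₀ + 1) (by omega) (by omega)
            have h3 := (hCidx y hyU.1).2.2.2.2
            omega
          · exact Or.inr ⟨hyU, hya, by omega⟩
        have cA : (ULs ∩ Set.Ioc a t).ncard ≤
            (Cs ∩ Set.Ioc u (z (stripIdx z m x₀ + 1))).ncard + (ULs ∩ Set.Ioc a u).ncard :=
          cov_card Set.inter_subset_right Set.inter_subset_right cov
        have cB : (Outu ∩ Set.Ioc u (z (stripIdx z m x₀))).ncard
            + (Outu ∩ Set.Ioc a u).ncard ≤ (Outu ∩ Set.Ioc a t).ncard := by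
          refine two_disj (Set.inter_subset_right : Outu ∩ Set.Ioc a t ⊆ Set.Ioc a t)
            ?_ ?_ ?_
          · intro y hy
            exact ⟨hy.1, lt_of_le_of_lt hu1 hy.2.1, by have := hy.2.2; omega⟩
          · intro y hy
            exact ⟨hy.1, hy.2.1, by have := hy.2.2; omega⟩
          · rw [Set.disjoint_left]
            intro y hy hy2
            have h1 := hy.2.1
            have h2 := hy2.2.2
            omega
        have ihu := ih u hut
        have rA : ((ULs ∩ Set.Ioc a t).ncard : ℝ) ≤
            ((Cs ∩ Set.Ioc u (z (stripIdx z m x₀ + 1))).ncard : ℝ)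
            + ((ULs ∩ Set.Ioc a u).ncard : ℝ) := by exact_mod_cast cA
        have rB : ((Outu ∩ Set.Ioc u (z (stripIdx z m x₀))).ncard : ℝ)
            + ((Outu ∩ Set.Ioc a u).ncard : ℝ) ≤ ((Outu ∩ Set.Ioc a t).ncard : ℝ) := by
          exact_mod_cast cB
        have eA := mul_le_mul_of_nonneg_left rA hlam
        linarith
  -- assemble
  have hFRIoc : FRs ⊆ Set.Ioc a b := fun y hy => ⟨hy.1, hy.2.1⟩
  have hR : μ / (1 - μ) * (URs.ncard : ℝ) ≤ (Outd.ncard : ℝ) := by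
    have h1 : URs ∩ Set.Ioc a b = URs := Set.inter_eq_left.mpr hURIoc
    have h2 : Outd ∩ Set.Ioc a b = Outd :=
      Set.inter_eq_left.mpr (fun y hy => ⟨hy.1.1, hy.1.2.1⟩)
    have h3 := indR b a (by omega)
    rw [h1, h2] at h3
    exact h3
  have hL : μ / (1 - μ) * (ULs.ncard : ℝ) ≤ (Outu.ncard : ℝ) := by
    have h1 : ULs ∩ Set.Ioc a b = ULs := Set.inter_eq_left.mpr hULIoc
    have h2 : Outu ∩ Set.Ioc a b = Outu :=
      Set.inter_eq_left.mpr (fun y hy => ⟨hy.1.1, hy.1.2.1⟩)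
    have h3 := indL b
    rw [h1, h2] at h3
    exact h3
  have hUcard : Us.ncard ≤ URs.ncard + ULs.ncard :=
    cov_card hURIoc hULIoc hUsplit
  have hOsum : Outd.ncard + Outu.ncard ≤ (FRs \ Cs).ncard := by
    refine two_disj ((Set.diff_subset.trans hFRIoc) : FRs \ Cs ⊆ Set.Ioc a b) ?_ ?_ ?_
    · intro y hy
      exact ⟨hy.1, hOdC y hy⟩
    · intro y hy
      exact ⟨hy.1, hOuC y hy⟩
    · rw [Set.disjoint_left]
      intro y hy hy2
      have hd1 := hy.2
      have hd2 := hy2.2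
      have hidxy := hidx y hy.1.1 hy.1.2.1
      have := hhle (stripIdx z m y) (stripIdx z m y + 1) (Nat.le_succ _) (by omega)
      omega
  have hFfin : FRs.Finite := (Set.finite_Ioc a b).subset hFRIoc
  have hdiff : (FRs \ Cs).ncard = FRs.ncard - Cs.ncard := Set.ncard_diff hCF (hFfin.subset hCF)
  have hCle : Cs.ncard ≤ FRs.ncard := Set.ncard_le_ncard hCF hFfin
  have rU : (Us.ncard : ℝ) ≤ (URs.ncard : ℝ) + (ULs.ncard : ℝ) := by exact_mod_cast hUcard
  have hsum : Outd.ncard + Outu.ncard + Cs.ncard ≤ FRs.ncard := by omega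
  have rO : (Outd.ncard : ℝ) + (Outu.ncard : ℝ) + (Cs.ncard : ℝ) ≤ (FRs.ncard : ℝ) := by
    exact_mod_cast hsum
  have eU := mul_le_mul_of_nonneg_left rU hlam
  linarith
end

section
/- (Grid approximation lemma) Let Γ be an α-fine B-grid for a box B, and let L be an increasing sequence of F-points contained in B. Then there exists a grid chain D⃗ (a box chain corresponding to a source-to-sink path in the grid digraph D(Γ)) such that the number of points of L not contained in the union of boxes of D⃗ is at most α·w(B). -/
/-- Grid approximation lemma.  `B` is the box `(a,b] × [c,d]` and `f` the array.
The grid `Γ` has columns `a = g 0 < g 1 < ⋯ < g r < g (r+1) = b` (the interior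
columns `g 1, …, g r` being the grid columns) and value set `YΓ ⊆ [c,d]` with
`d ∈ YΓ`.  `α`-fineness: every index subinterval `(u,v] ⊆ (a,b]` of size exceeding
`α·w(B)` contains a grid column, and `YΓ` is an `(α/r)`-value net for `B`.
If `L` is an increasing sequence of `F`-points contained in `B`, then some grid
chain (given by nondecreasing heights `y i ∈ YΓ` at the columns, extended by
`y 0 = c`, `y (r+1) = d`) misses at most `α·w(B)` points of `L`. -/
theorem stmt6 (a b c d r : ℕ) (hab : a < b) (hcd : c ≤ d) (hr : 0 < r)
    (f : ℕ → ℕ) (α : ℝ) (hα : 0 < α)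
    (g : ℕ → ℕ) (hg0 : g 0 = a) (hgtop : g (r + 1) = b)
    (hgmono : ∀ i ≤ r, g i < g (i + 1))
    (YΓ : Finset ℕ) (hYsub : ∀ y ∈ YΓ, c ≤ y ∧ y ≤ d) (hYtop : d ∈ YΓ)
    (hfine : ∀ u v : ℕ, a ≤ u → v ≤ b →
      α * ((b : ℝ) - (a : ℝ)) < ((v - u : ℕ) : ℝ) →
      ∃ i, 1 ≤ i ∧ i ≤ r ∧ u < g i ∧ g i ≤ v)
    (hnet : ∀ p q : ℕ, c ≤ p → q ≤ d → p ≤ q →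
      (α / (r : ℝ)) * ((b : ℝ) - (a : ℝ))
          ≤ ({x : ℕ | a < x ∧ x ≤ b ∧ p ≤ f x ∧ f x ≤ q}.ncard : ℝ) →
      ∃ y ∈ YΓ, p ≤ y ∧ y ≤ q)
    (L : Set ℕ)
    (hLB : ∀ x ∈ L, a < x ∧ x ≤ b ∧ c ≤ f x ∧ f x ≤ d)
    (hLchain : ∀ x ∈ L, ∀ x' ∈ L, x < x' → f x ≤ f x') :
    ∃ y : ℕ → ℕ, y 0 = c ∧ y (r + 1) = d ∧
      (∀ i, 1 ≤ i → i ≤ r → y i ∈ YΓ) ∧ (∀ i ≤ r, y i ≤ y (i + 1)) ∧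
      ({x : ℕ | x ∈ L ∧
          ¬ ∃ i ≤ r, g i < x ∧ x ≤ g (i + 1) ∧ y i ≤ f x ∧ f x ≤ y (i + 1)}.ncard : ℝ)
        ≤ α * ((b : ℝ) - (a : ℝ)) := by
  classical
  have hr1 : 1 ≤ r := hr
  have hrR : (0:ℝ) < (r:ℝ) := by exact_mod_cast hr
  have hba : (0:ℝ) < (b:ℝ) - (a:ℝ) := by
    have : (a:ℝ) < (b:ℝ) := by exact_mod_cast hab
    linarith
  set thr : ℝ := α / (r:ℝ) * ((b:ℝ) - (a:ℝ)) with hthr_def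
  have hthr : 0 < thr := mul_pos (div_pos hα hrR) hba
  have hrthr : (r:ℝ) * thr = α * ((b:ℝ) - (a:ℝ)) := by
    rw [hthr_def]; field_simp
  -- monotonicity of g
  have hgm : ∀ j, j ≤ r + 1 → ∀ i, i ≤ j → g i ≤ g j := by
    intro j
    induction j with
    | zero =>
      intro _ i hi
      have : i = 0 := Nat.le_zero.mp hi
      rw [this]
    | succ n ih =>
      intro hn i hi
      rcases Nat.eq_or_lt_of_le hi with h | h
      · rw [h]
      · have h1 : i ≤ n := by omega
        have h2 := ih (by omega) i h1
        have h3 := hgmono n (by omega)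
        omega
  set S : Finset ℕ := Finset.Ioc a b with hSdef
  have hxS : ∀ x ∈ L, x ∈ S := fun x hx =>
    Finset.mem_Ioc.mpr ⟨(hLB x hx).1, (hLB x hx).2.1⟩
  set p : ℕ → ℕ := fun i => max ((S.filter (fun x => x ∈ L ∧ x ≤ g i)).sup f) c with hpdef
  have hpd : ∀ i, p i ≤ d := by
    intro i
    refine max_le (Finset.sup_le ?_) hcd
    intro x hx
    rw [Finset.mem_filter] at hx
    exact (hLB x hx.2.1).2.2.2
  have hcp : ∀ i, c ≤ p i := fun i => le_max_right _ _
  have hpm : ∀ i j, i ≤ j → j ≤ r + 1 → p i ≤ p j := by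
    intro i j hij hj
    refine max_le_max (Finset.sup_mono ?_) le_rfl
    intro x hx
    rw [Finset.mem_filter] at hx ⊢
    exact ⟨hx.1, hx.2.1, hx.2.2.trans (hgm j hj i hij)⟩
  have hfp : ∀ x ∈ L, ∀ i, x ≤ g i → f x ≤ p i := by
    intro x hx i hxi
    exact le_trans (Finset.le_sup (Finset.mem_filter.mpr ⟨hxS x hx, hx, hxi⟩)) (le_max_left _ _)
  have hpf : ∀ x ∈ L, ∀ i, g i < x → p i ≤ f x := by
    intro x hx i hix
    refine max_le (Finset.sup_le ?_) (hLB x hx).2.2.1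
    intro z hz
    rw [Finset.mem_filter] at hz
    exact hLchain z hz.2.1 x hx (by omega)
  set A : ℕ → Finset ℕ := fun i => YΓ.filter (fun z => z ≤ p i) with hAdef
  have hYne : YΓ.Nonempty := ⟨d, hYtop⟩
  set m : ℕ := YΓ.min' hYne with hmdef
  have hmY : m ∈ YΓ := YΓ.min'_mem hYne
  set y : ℕ → ℕ := fun i => if i = 0 then c else if i ≤ r then
      (if h : (A i).Nonempty then (A i).max' h else m) else d with hydef
  have hy0 : y 0 = c := by simp [hydef]
  have hyr1 : y (r+1) = d := by
    simp only [hydef]; rw [if_neg (by omega), if_neg (by omega)]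
  have hyY : ∀ i, 1 ≤ i → i ≤ r → y i ∈ YΓ := by
    intro i h1 h2
    simp only [hydef]
    rw [if_neg (by omega), if_pos h2]
    by_cases h : (A i).Nonempty
    · rw [dif_pos h]
      have := (A i).max'_mem h
      simp only [hAdef, Finset.mem_filter] at this
      exact this.1
    · rw [dif_neg h]; exact hmY
  have hcy : ∀ i, 1 ≤ i → i ≤ r → c ≤ y i := fun i h1 h2 => (hYsub _ (hyY i h1 h2)).1
  have hyd : ∀ i, 1 ≤ i → i ≤ r → y i ≤ d := fun i h1 h2 => (hYsub _ (hyY i h1 h2)).2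
  have hAs : ∀ i j, i ≤ j → j ≤ r + 1 → A i ⊆ A j := by
    intro i j hij hj z hz
    simp only [hAdef, Finset.mem_filter] at hz ⊢
    exact ⟨hz.1, hz.2.trans (hpm i j hij hj)⟩
  have hymono : ∀ i ≤ r, y i ≤ y (i + 1) := by
    intro i hi
    by_cases h0 : i = 0
    · rw [h0, hy0]; exact hcy 1 le_rfl hr1
    · by_cases hir : i = r
      · rw [hir, hyr1]; exact hyd r (by omega) le_rfl
      · have hi1 : i + 1 ≤ r := by omega
        simp only [hydef]
        rw [if_neg h0, if_pos hi, if_neg (by omega), if_pos hi1]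
        by_cases hA : (A i).Nonempty
        · have hA' : (A (i+1)).Nonempty := hA.mono (hAs i (i+1) (by omega) (by omega))
          rw [dif_pos hA, dif_pos hA']
          exact Finset.max'_subset hA (hAs i (i+1) (by omega) (by omega))
        · rw [dif_neg hA]
          by_cases hA' : (A (i+1)).Nonempty
          · rw [dif_pos hA']
            have := (A (i+1)).max'_mem hA'
            simp only [hAdef, Finset.mem_filter] at this
            exact YΓ.min'_le _ this.1
          · rw [dif_neg hA']
  -- locating the column interval of a point
  have hfind : ∀ x, a < x → x ≤ b → ∃ i, i ≤ r ∧ g i < x ∧ x ≤ g (i+1) := by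
    intro x hax hxb
    have hne : ((Finset.range (r+1)).filter (fun j => g j < x)).Nonempty :=
      ⟨0, Finset.mem_filter.mpr ⟨Finset.mem_range.mpr (by omega), by rw [hg0]; exact hax⟩⟩
    set i := ((Finset.range (r+1)).filter (fun j => g j < x)).max' hne with hidef
    have hiF : i ∈ (Finset.range (r+1)).filter (fun j => g j < x) := Finset.max'_mem _ hne
    rw [Finset.mem_filter, Finset.mem_range] at hiF
    refine ⟨i, ?_, hiF.2, ?_⟩
    · omega
    by_contra hcon
    push_neg at hcon
    have hi1r : i + 1 ≤ r := by
      by_contra h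
      have hir : i = r := by omega
      rw [hir, hgtop] at hcon
      omega
    have hmem : i + 1 ∈ (Finset.range (r+1)).filter (fun j => g j < x) :=
      Finset.mem_filter.mpr ⟨Finset.mem_range.mpr (by omega), hcon⟩
    have hle := Finset.le_max' _ (i+1) hmem
    rw [← hidef] at hle
    omega
  -- the counting helper
  have hcount : ∀ pl qh : ℕ, c ≤ pl → qh ≤ d → (∀ z ∈ YΓ, ¬(pl ≤ z ∧ z ≤ qh)) →
      ((S.filter (fun x => pl ≤ f x ∧ f x ≤ qh)).card : ℝ) < thr := by
    intro pl qh hc hd hz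
    by_cases hpq : pl ≤ qh
    · by_contra hle
      push_neg at hle
      obtain ⟨z, hzY, h1, h2⟩ := hnet pl qh hc hd hpq (by
        have hset : {x : ℕ | a < x ∧ x ≤ b ∧ pl ≤ f x ∧ f x ≤ qh}
            = ↑(S.filter (fun x => pl ≤ f x ∧ f x ≤ qh)) := by
          ext x
          simp [hSdef, Finset.mem_Ioc, and_assoc]
        rw [hset, Set.ncard_coe_finset]
        exact hle)
      exact hz z hzY ⟨h1, h2⟩
    · have he : S.filter (fun x => pl ≤ f x ∧ f x ≤ qh) = ∅ := by
        rw [Finset.filter_eq_empty_iff]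
        intro x _ hx
        omega
      rw [he]
      simpa using hthr
  set Ti : ℕ → Finset ℕ := fun i =>
      S.filter (fun x => g i < x ∧ x ≤ g (i+1) ∧ y (i+1) + 1 ≤ f x ∧ f x ≤ p (i+1)) with hTidef
  set T : Finset ℕ := S.filter (fun x => c ≤ f x ∧ f x ≤ m - 1) with hTdef
  set Mfin : Finset ℕ := S.filter (fun x => x ∈ L ∧
      ¬∃ i, i ≤ r ∧ g i < x ∧ x ≤ g (i+1) ∧ y i ≤ f x ∧ f x ≤ y (i+1)) with hMdef
  -- bound for Ti
  have hTibound : ∀ i, i < r → (A (i+1)).Nonempty → ((Ti i).card : ℝ) < thr := by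
    intro i hir hA
    have hyi : y (i+1) = (A (i+1)).max' hA := by
      simp only [hydef]; rw [if_neg (by omega), if_pos (by omega), dif_pos hA]
    have hymem : y (i+1) ∈ A (i+1) := by rw [hyi]; exact (A (i+1)).max'_mem hA
    simp only [hAdef, Finset.mem_filter] at hymem
    have hb1 := hcount (y (i+1) + 1) (p (i+1))
      (by have := (hYsub _ hymem.1).1; omega) (hpd _) (by
        intro z hzY hz
        have hzA : z ∈ A (i+1) := by
          simp only [hAdef, Finset.mem_filter]; exact ⟨hzY, hz.2⟩
        have hz2 := (A (i+1)).le_max' z hzA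
        rw [← hyi] at hz2
        omega)
    refine lt_of_le_of_lt ?_ hb1
    have hsub : Ti i ⊆ S.filter (fun x => y (i+1) + 1 ≤ f x ∧ f x ≤ p (i+1)) := by
      intro x hx
      simp only [hTidef, Finset.mem_filter] at hx ⊢
      exact ⟨hx.1, hx.2.2.2.1, hx.2.2.2.2⟩
    exact_mod_cast Finset.card_le_card hsub
  -- membership dichotomy for missed points
  have hmem : ∀ x ∈ Mfin,
      ((∃ i, 1 ≤ i ∧ i ≤ r ∧ ¬(A i).Nonempty) ∧ x ∈ T) ∨
      (∃ i, i < r ∧ (A (i+1)).Nonempty ∧ x ∈ Ti i) := by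
    intro x hx
    simp only [hMdef, Finset.mem_filter] at hx
    obtain ⟨hxS', hxL, hmiss⟩ := hx
    have hax : a < x := (hLB x hxL).1
    have hxb : x ≤ b := (hLB x hxL).2.1
    obtain ⟨i, hir, hgi, hgi1⟩ := hfind x hax hxb
    have hni : ¬(y i ≤ f x ∧ f x ≤ y (i+1)) := fun h =>
      hmiss ⟨i, hir, hgi, hgi1, h.1, h.2⟩
    rw [not_and_or, Nat.not_le, Nat.not_le] at hni
    by_cases hb : f x < y i
    · left
      have h1i : 1 ≤ i := by
        by_contra h
        have hi0 : i = 0 := by omega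
        rw [hi0, hy0] at hb
        have := (hLB x hxL).2.2.1
        omega
      have hpi : p i ≤ f x := hpf x hxL i hgi
      have hAi : ¬(A i).Nonempty := by
        intro hA
        have hyi : y i = (A i).max' hA := by
          simp only [hydef]; rw [if_neg (by omega), if_pos hir, dif_pos hA]
        have hmm : y i ∈ A i := by rw [hyi]; exact (A i).max'_mem hA
        simp only [hAdef, Finset.mem_filter] at hmm
        omega
      have hym : y i = m := by
        simp only [hydef]; rw [if_neg (by omega), if_pos hir, dif_neg hAi]
      rw [hym] at hb
      refine ⟨⟨i, h1i, hir, hAi⟩, ?_⟩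
      simp only [hTdef, Finset.mem_filter]
      exact ⟨hxS', (hLB x hxL).2.2.1, by omega⟩
    · right
      have ht : y (i+1) < f x := by
        rcases hni with h | h
        · omega
        · exact h
      have hilt : i < r := by
        by_contra h
        have hir' : i = r := by omega
        rw [hir', hyr1] at ht
        have := (hLB x hxL).2.2.2
        omega
      have hfxp : f x ≤ p (i+1) := hfp x hxL (i+1) hgi1
      have hA : (A (i+1)).Nonempty := by
        by_contra hA
        have hym : y (i+1) = m := by
          simp only [hydef]; rw [if_neg (by omega), if_pos (by omega), dif_neg hA]
        have hmn : ¬(m ≤ p (i+1)) := fun hle => hA ⟨m, by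
          simp only [hAdef, Finset.mem_filter]; exact ⟨hmY, hle⟩⟩
        omega
      refine ⟨i, hilt, hA, ?_⟩
      simp only [hTidef, Finset.mem_filter]
      exact ⟨hxS', hgi, hgi1, by omega, hfxp⟩
  refine ⟨y, hy0, hyr1, hyY, hymono, ?_⟩
  have hgoalset : {x : ℕ | x ∈ L ∧
      ¬ ∃ i ≤ r, g i < x ∧ x ≤ g (i + 1) ∧ y i ≤ f x ∧ f x ≤ y (i + 1)} = ↑Mfin := by
    ext x
    simp only [hMdef, Finset.coe_filter, Set.mem_setOf_eq, hSdef, Finset.mem_Ioc]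
    constructor
    · rintro ⟨hxL, hm⟩
      exact ⟨⟨(hLB x hxL).1, (hLB x hxL).2.1⟩, hxL, hm⟩
    · rintro ⟨-, hxL, hm⟩
      exact ⟨hxL, hm⟩
  rw [hgoalset, Set.ncard_coe_finset]
  by_cases hk : ∃ i, 1 ≤ i ∧ i ≤ r ∧ ¬(A i).Nonempty
  · obtain ⟨i0, h1, h2, hA0⟩ := hk
    have hcm : c + 1 ≤ m := by
      have hmn : ¬(m ≤ p i0) := fun hle => hA0 ⟨m, by
        simp only [hAdef, Finset.mem_filter]; exact ⟨hmY, hle⟩⟩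
      have := hcp i0
      omega
    have hTbound : (T.card : ℝ) < thr := by
      have := hcount c (m-1) le_rfl (by have := (hYsub m hmY).2; omega) (by
        intro z hzY hz
        have := YΓ.min'_le z hzY
        omega)
      exact this
    set F := (Finset.range r).filter (fun i => (A (i+1)).Nonempty) with hFdef
    have hsub : Mfin ⊆ T ∪ F.biUnion Ti := by
      intro x hx
      rcases hmem x hx with ⟨-, hxT⟩ | ⟨i, hilt, hA, hxTi⟩
      · exact Finset.mem_union_left _ hxT
      · refine Finset.mem_union_right _ (Finset.mem_biUnion.mpr ⟨i, ?_, hxTi⟩)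
        simp only [hFdef, Finset.mem_filter, Finset.mem_range]
        exact ⟨hilt, hA⟩
    have hFcard : F.card ≤ r - 1 := by
      have hFsub : F ⊆ (Finset.range r).erase (i0 - 1) := by
        intro i hi
        simp only [hFdef, Finset.mem_filter] at hi
        refine Finset.mem_erase.mpr ⟨?_, hi.1⟩
        intro h
        have hii : i + 1 = i0 := by omega
        rw [hii] at hi
        exact hA0 hi.2
      calc F.card ≤ _ := Finset.card_le_card hFsub
        _ = r - 1 := by
          rw [Finset.card_erase_of_mem (Finset.mem_range.mpr (by omega)), Finset.card_range]
    have hcard1 : Mfin.card ≤ T.card + ∑ i ∈ F, (Ti i).card := by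
      calc Mfin.card ≤ (T ∪ F.biUnion Ti).card := Finset.card_le_card hsub
        _ ≤ T.card + (F.biUnion Ti).card := Finset.card_union_le _ _
        _ ≤ T.card + ∑ i ∈ F, (Ti i).card := by
            exact Nat.add_le_add_left (Finset.card_biUnion_le) _
    have h1R : (Mfin.card : ℝ) ≤ (T.card : ℝ) + ∑ i ∈ F, ((Ti i).card : ℝ) := by
      exact_mod_cast hcard1
    have h2R : ∑ i ∈ F, ((Ti i).card : ℝ) ≤ (F.card : ℝ) * thr := by
      calc ∑ i ∈ F, ((Ti i).card : ℝ) ≤ ∑ _i ∈ F, thr := by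
            refine Finset.sum_le_sum ?_
            intro i hi
            simp only [hFdef, Finset.mem_filter, Finset.mem_range] at hi
            exact (hTibound i hi.1 hi.2).le
        _ = (F.card : ℝ) * thr := by rw [Finset.sum_const, nsmul_eq_mul]
    have hF' : (F.card : ℝ) ≤ (r : ℝ) - 1 := by
      have h3 : (F.card : ℝ) ≤ ((r - 1 : ℕ) : ℝ) := by exact_mod_cast hFcard
      have h4 : ((r - 1 : ℕ) : ℝ) = (r : ℝ) - 1 := by
        rw [Nat.cast_sub hr1, Nat.cast_one]
      linarith
    have h5 : (F.card : ℝ) * thr ≤ ((r:ℝ) - 1) * thr :=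
      mul_le_mul_of_nonneg_right hF' hthr.le
    linarith
  · push_neg at hk
    have hsub : Mfin ⊆ (Finset.range r).biUnion Ti := by
      intro x hx
      rcases hmem x hx with ⟨⟨i, h1, h2, hA⟩, -⟩ | ⟨i, hilt, hA, hxTi⟩
      · exact absurd (hk i h1 h2) (by exact fun h => hA h)
      · exact Finset.mem_biUnion.mpr ⟨i, Finset.mem_range.mpr hilt, hxTi⟩
    have hcard1 : Mfin.card ≤ ∑ i ∈ Finset.range r, (Ti i).card :=
      le_trans (Finset.card_le_card hsub) Finset.card_biUnion_le
    have h1R : (Mfin.card : ℝ) ≤ ∑ i ∈ Finset.range r, ((Ti i).card : ℝ) := by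
      exact_mod_cast hcard1
    have h2R : ∑ i ∈ Finset.range r, ((Ti i).card : ℝ) < ∑ _i ∈ Finset.range r, thr := by
      refine Finset.sum_lt_sum_of_nonempty (Finset.nonempty_range_iff.mpr (by omega)) ?_
      intro i hi
      have hir := Finset.mem_range.mp hi
      exact hTibound i hir (hk (i+1) (by omega) (by omega))
    have h3 : ∑ _i ∈ Finset.range r, thr = (r:ℝ) * thr := by
      rw [Finset.sum_const, Finset.card_range, nsmul_eq_mul]
    linarith
end

section
/- Let B be a box split by a point P ∈ F ∩ B into B_L = Box(P_BL(B), P) and B_R = Box(P, P_TR(B)). Then lis(B) ≥ lis(B_L) + lis(B_R), and moreover lis(B) = max over points Q with x(Q) = x(P) and y(Q) ∈ Y(B) of [lis(Box(P_BL(B), Q)) + lis(Box(Q, P_TR(B)))]. -/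
/-- `P ≺ Q` for points of ℕ². -/
def prec (P Q : ℕ × ℕ) : Prop := P.1 < Q.1 ∧ P.2 ≤ Q.2

/-- The box spanned by `P ≺ Q`: `{R | P ≺ R ≤ Q}` (componentwise `≤`). -/
def box (P Q : ℕ × ℕ) : Set (ℕ × ℕ) := {R | prec P R ∧ R ≤ Q}

/-- Indices `x ∈ (0,n]` whose `F`-point `(x, f x)` lies in `C`. -/
def fIdx (n : ℕ) (f : ℕ → ℕ) (C : Set (ℕ × ℕ)) : Set ℕ :=
  {x | 0 < x ∧ x ≤ n ∧ ((x, f x) : ℕ × ℕ) ∈ C}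

/-- `lis(C)`: the maximum size of an increasing sequence of `F`-points inside `C`. -/
noncomputable def lisIn (n : ℕ) (f : ℕ → ℕ) (C : Set (ℕ × ℕ)) : ℕ :=
  sSup {k | ∃ X : Finset ℕ, (∀ x ∈ X, x ∈ fIdx n f C) ∧
    (∀ x ∈ X, ∀ y ∈ X, x < y → f x ≤ f y) ∧ X.card = k}

def lisSet (n : ℕ) (f : ℕ → ℕ) (C : Set (ℕ × ℕ)) : Set ℕ :=
  {k | ∃ X : Finset ℕ, (∀ x ∈ X, x ∈ fIdx n f C) ∧
    (∀ x ∈ X, ∀ y ∈ X, x < y → f x ≤ f y) ∧ X.card = k}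

lemma lisSet_bdd (n : ℕ) (f : ℕ → ℕ) (C : Set (ℕ × ℕ)) : BddAbove (lisSet n f C) := by
  refine ⟨n, fun k hk => ?_⟩
  obtain ⟨X, h1, -, h3⟩ := hk
  subst h3
  calc X.card ≤ (Finset.Icc 1 n).card := Finset.card_le_card (fun x hx => by
        have := h1 x hx
        simp only [fIdx, Set.mem_setOf_eq] at this
        exact Finset.mem_Icc.2 ⟨this.1, this.2.1⟩)
    _ = n := by simp

lemma le_lis {n : ℕ} {f : ℕ → ℕ} {C : Set (ℕ × ℕ)} {k : ℕ} (hk : k ∈ lisSet n f C) :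
    k ≤ lisIn n f C := le_csSup (lisSet_bdd n f C) hk

lemma lis_mem (n : ℕ) (f : ℕ → ℕ) (C : Set (ℕ × ℕ)) : lisIn n f C ∈ lisSet n f C :=
  Nat.sSup_mem ⟨0, ∅, by simp, by simp, rfl⟩ (lisSet_bdd n f C)

/-- If a box `B = Box(Q₀,Q₁)` is split at a point `P ∈ F ∩ B` into
`B_L = Box(Q₀,P)` and `B_R = Box(P,Q₁)`, then `lis(B) ≥ lis(B_L) + lis(B_R)`;
moreover `lis(B)` equals the maximum over points `Q = (x(P), y)` with
`y ∈ Y(B) = [Q₀.2, Q₁.2]` of `lis(Box(Q₀,Q)) + lis(Box(Q,Q₁))`. -/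
theorem stmt11 (n : ℕ) (f : ℕ → ℕ) (Q₀ Q₁ P : ℕ × ℕ)
    (hF : ∃ p, 0 < p ∧ p ≤ n ∧ P = (p, f p))
    (hPB : P ∈ box Q₀ Q₁) :
    (lisIn n f (box Q₀ P) + lisIn n f (box P Q₁) ≤ lisIn n f (box Q₀ Q₁)) ∧
    (∀ y : ℕ, Q₀.2 ≤ y → y ≤ Q₁.2 →
      lisIn n f (box Q₀ (P.1, y)) + lisIn n f (box (P.1, y) Q₁)
        ≤ lisIn n f (box Q₀ Q₁)) ∧
    (∃ y : ℕ, Q₀.2 ≤ y ∧ y ≤ Q₁.2 ∧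
      lisIn n f (box Q₀ Q₁)
        = lisIn n f (box Q₀ (P.1, y)) + lisIn n f (box (P.1, y) Q₁)) := by
  obtain ⟨⟨hx1, hy1⟩, hle⟩ := hPB
  have hx2 : P.1 ≤ Q₁.1 := hle.1
  have hy2 : P.2 ≤ Q₁.2 := hle.2
  -- the key inequality (part 2)
  have key : ∀ y : ℕ, Q₀.2 ≤ y → y ≤ Q₁.2 →
      lisIn n f (box Q₀ (P.1, y)) + lisIn n f (box (P.1, y) Q₁)
        ≤ lisIn n f (box Q₀ Q₁) := by
    intro y hyl hyr
    obtain ⟨XL, hL1, hL2, hL3⟩ := lis_mem n f (box Q₀ (P.1, y))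
    obtain ⟨XR, hR1, hR2, hR3⟩ := lis_mem n f (box (P.1, y) Q₁)
    have hdisj : Disjoint XL XR := by
      rw [Finset.disjoint_left]
      intro a haL haR
      have h1 := (hL1 a haL).2.2
      have h2 := (hR1 a haR).2.2
      exact absurd h1.2.1 (not_le.2 h2.1.1)
    have hmem : (XL ∪ XR).card ∈ lisSet n f (box Q₀ Q₁) := by
      refine ⟨XL ∪ XR, ?_, ?_, rfl⟩
      · intro a ha
        rcases Finset.mem_union.1 ha with h | h
        · obtain ⟨ha0, han, hb⟩ := hL1 a h
          exact ⟨ha0, han, hb.1, hb.2.trans ⟨hx2, hyr⟩⟩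
        · obtain ⟨ha0, han, hb⟩ := hR1 a h
          exact ⟨ha0, han, ⟨lt_trans hx1 hb.1.1, le_trans hyl hb.1.2⟩, hb.2⟩
      · intro a ha b hb hab
        rcases Finset.mem_union.1 ha with h | h <;>
          rcases Finset.mem_union.1 hb with h' | h'
        · exact hL2 a h b h' hab
        · exact le_trans (hL1 a h).2.2.2.2 (hR1 b h').2.2.1.2
        · exact absurd (lt_trans ((hR1 a h).2.2.1.1) hab |>.trans_le (hL1 b h').2.2.2.1)
            (lt_irrefl _)
        · exact hR2 a h b h' hab
    calc lisIn n f (box Q₀ (P.1, y)) + lisIn n f (box (P.1, y) Q₁)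
        = XL.card + XR.card := by rw [hL3, hR3]
      _ = (XL ∪ XR).card := (Finset.card_union_of_disjoint hdisj).symm
      _ ≤ lisIn n f (box Q₀ Q₁) := le_lis hmem
  refine ⟨?_, key, ?_⟩
  · have := key P.2 hy1 hy2
    simpa using this
  · -- part 3: existence of an optimal split height
    obtain ⟨X, hX1, hX2, hX3⟩ := lis_mem n f (box Q₀ Q₁)
    set XL := X.filter (fun x => x ≤ P.1) with hXL
    set XR := X.filter (fun x => ¬ x ≤ P.1) with hXR
    set y := max Q₀.2 (XL.sup f) with hy
    have hyl : Q₀.2 ≤ y := le_max_left _ _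
    have hyr : y ≤ Q₁.2 := by
      refine max_le (hy1.trans hy2) (Finset.sup_le fun a ha => ?_)
      exact (hX1 a (Finset.filter_subset _ _ ha)).2.2.2.2
    have hLmem : XL.card ∈ lisSet n f (box Q₀ (P.1, y)) := by
      refine ⟨XL, ?_, ?_, rfl⟩
      · intro a ha
        obtain ⟨haX, hap⟩ := Finset.mem_filter.1 ha
        obtain ⟨ha0, han, hb⟩ := hX1 a haX
        have hfy : f a ≤ y := le_trans (Finset.le_sup (f := f) ha) (le_max_right _ _)
        exact ⟨ha0, han, hb.1, hap, hfy⟩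
      · intro a ha b hb hab
        exact hX2 a (Finset.filter_subset _ _ ha) b (Finset.filter_subset _ _ hb) hab
    have hRmem : XR.card ∈ lisSet n f (box (P.1, y) Q₁) := by
      refine ⟨XR, ?_, ?_, rfl⟩
      · intro a ha
        obtain ⟨haX, hap⟩ := Finset.mem_filter.1 ha
        push_neg at hap
        obtain ⟨ha0, han, hb⟩ := hX1 a haX
        refine ⟨ha0, han, ⟨hap, max_le hb.1.2 (Finset.sup_le fun b hb' => ?_)⟩, hb.2⟩
        obtain ⟨hbX, hbp⟩ := Finset.mem_filter.1 hb'
        exact hX2 b hbX a haX (lt_of_le_of_lt hbp hap)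
      · intro a ha b hb hab
        exact hX2 a (Finset.filter_subset _ _ ha) b (Finset.filter_subset _ _ hb) hab
    refine ⟨y, hyl, hyr, le_antisymm ?_ (key y hyl hyr)⟩
    calc lisIn n f (box Q₀ Q₁) = X.card := hX3.symm
      _ = XL.card + XR.card := (Finset.card_filter_add_card_filter_not _).symm
      _ ≤ _ := add_le_add (le_lis hLmem) (le_lis hRmem)
end

section
/- For a box chain D⃗ spanning box B with associated increasing point sequence P(D⃗), the three sets D⃗^∪ = ∪_{T ∈ D⃗} T, D⃗^{NW} = B ∩ ∪_{P ∈ P(D⃗)} P^{NW}, and D⃗^{SE} = B ∩ ∪_{P ∈ P(D⃗)} P^{SE} form a partition of B. -/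
/-- For a box chain spanning `B = Box(P 0, P k)` with associated increasing point
sequence `P 0 ≺ ⋯ ≺ P k`, the three sets `D⃗^∪` (union of the chain boxes),
`D⃗^{NW} = B ∩ ⋃ᵢ (P i)^{NW}` and `D⃗^{SE} = B ∩ ⋃ᵢ (P i)^{SE}` form a
partition of `B`. -/
theorem stmt12 (k : ℕ) (hk : 0 < k) (P : ℕ → ℕ × ℕ)
    (hP : ∀ i < k, prec (P i) (P (i + 1)))
    (DU NW SE : Set (ℕ × ℕ))
    (hDU : DU = ⋃ i < k, box (P i) (P (i + 1)))
    (hNW : NW = box (P 0) (P k) ∩ ⋃ i ≤ k, {Q | Q.1 ≤ (P i).1 ∧ (P i).2 < Q.2})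
    (hSE : SE = box (P 0) (P k) ∩ ⋃ i ≤ k, {Q | (P i).1 < Q.1 ∧ Q.2 < (P i).2}) :
    DU ∪ NW ∪ SE = box (P 0) (P k) ∧
    DU ∩ NW = ∅ ∧ DU ∩ SE = ∅ ∧ NW ∩ SE = ∅ := by
  have hx : ∀ j, j ≤ k → ∀ i, i < j → (P i).1 < (P j).1 := by
    intro j
    induction j with
    | zero => intro _ i hi; omega
    | succ n ih =>
      intro hj i hi
      have hn := hP n (by omega)
      rcases Nat.lt_succ_iff_lt_or_eq.mp hi with h | h
      · exact lt_trans (ih (by omega) i h) hn.1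
      · subst h; exact hn.1
  have hy : ∀ j, j ≤ k → ∀ i, i ≤ j → (P i).2 ≤ (P j).2 := by
    intro j
    induction j with
    | zero =>
      intro _ i hi
      have : i = 0 := Nat.le_zero.mp hi
      subst this; exact le_refl _
    | succ n ih =>
      intro hj i hi
      have hn := hP n (by omega)
      rcases Nat.le_succ_iff.mp hi with h | h
      · exact le_trans (ih (by omega) i h) hn.2
      · subst h; exact le_refl _
  subst hDU hNW hSE
  refine ⟨?_, ?_, ?_, ?_⟩
  · ext R
    simp only [Set.mem_union, Set.mem_inter_iff, Set.mem_iUnion, Set.mem_setOf_eq,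
      box, prec, Prod.le_def]
    constructor
    · rintro ((⟨i, hi, ⟨⟨h1, h2⟩, h3, h4⟩⟩ | ⟨hB, _⟩) | ⟨hB, _⟩)
      · refine ⟨⟨?_, ?_⟩, ?_, ?_⟩
        · calc (P 0).1 ≤ (P i).1 := by
                rcases Nat.eq_zero_or_pos i with h | h
                · subst h; exact le_refl _
                · exact le_of_lt (hx i (by omega) 0 h)
             _ < R.1 := h1
        · exact le_trans (hy i (by omega) 0 (by omega)) h2
        · calc R.1 ≤ (P (i+1)).1 := h3
             _ ≤ (P k).1 := by
                rcases Nat.lt_or_ge (i+1) k with h | h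
                · exact le_of_lt (hx k (le_refl _) (i+1) h)
                · have : i + 1 = k := by omega
                  rw [this]
        · calc R.2 ≤ (P (i+1)).2 := h4
             _ ≤ (P k).2 := hy k (le_refl _) (i+1) (by omega)
      · exact hB
      · exact hB
    · intro hR
      obtain ⟨⟨h1, h2⟩, h3, h4⟩ := hR
      -- find the greatest i ≤ k with (P i).1 < R.1
      set p : ℕ → Prop := fun i => (P i).1 < R.1 with hp
      have hdec : DecidablePred p := fun i => Nat.decLt _ _
      set i := Nat.findGreatest p k with hi
      have hpi : p i := Nat.findGreatest_spec (Nat.zero_le k) h1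
      have hile : i ≤ k := Nat.findGreatest_le k
      have hik : i < k := by
        rcases Nat.lt_or_ge i k with h | h
        · exact h
        · exfalso
          have : i = k := by omega
          rw [this] at hpi
          exact absurd h3 (by simpa using Nat.not_le_of_lt hpi)
      have hnext : ¬ p (i + 1) :=
        Nat.findGreatest_is_greatest (Nat.lt_succ_self i) (by omega)
      have hnext' : R.1 ≤ (P (i+1)).1 := Nat.le_of_not_lt hnext
      rcases Nat.lt_or_ge R.2 (P i).2 with hlt | hge
      · -- SE with index i
        exact Or.inr ⟨⟨⟨h1, h2⟩, h3, h4⟩, i, hile, hpi, hlt⟩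
      · rcases Nat.lt_or_ge (P (i+1)).2 R.2 with hlt2 | hge2
        · -- NW with index i+1
          exact Or.inl (Or.inr ⟨⟨⟨h1, h2⟩, h3, h4⟩, i+1, by omega, hnext', hlt2⟩)
        · -- in DU
          exact Or.inl (Or.inl ⟨i, hik, ⟨⟨hpi, hge⟩, hnext', hge2⟩⟩)
  · rw [Set.eq_empty_iff_forall_notMem]
    rintro R ⟨hDU, _, hNW⟩
    simp only [Set.mem_iUnion, Set.mem_setOf_eq, box, prec, Prod.le_def] at hDU hNW
    obtain ⟨i, hi, ⟨⟨h1, h2⟩, h3, h4⟩⟩ := hDU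
    obtain ⟨j, hj, hj1, hj2⟩ := hNW
    have hji : j ≤ i := by
      by_contra h
      have : i + 1 ≤ j := by omega
      have := hy j hj (i+1) this
      omega
    have : (P j).1 ≤ (P i).1 := by
      rcases Nat.lt_or_ge j i with h | h
      · exact le_of_lt (hx i (by omega) j h)
      · have : j = i := by omega
        rw [this]
    omega
  · rw [Set.eq_empty_iff_forall_notMem]
    rintro R ⟨hDU, _, hSE⟩
    simp only [Set.mem_iUnion, Set.mem_setOf_eq, box, prec, Prod.le_def] at hDU hSE
    obtain ⟨i, hi, ⟨⟨h1, h2⟩, h3, h4⟩⟩ := hDU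
    obtain ⟨j, hj, hj1, hj2⟩ := hSE
    have hji : i + 1 ≤ j := by
      by_contra h
      have : j ≤ i := by omega
      have := hy i (by omega) j this
      omega
    have : (P (i+1)).1 ≤ (P j).1 := by
      rcases Nat.lt_or_ge (i+1) j with h | h
      · exact le_of_lt (hx j hj (i+1) h)
      · have : i + 1 = j := by omega
        rw [this]
    omega
  · rw [Set.eq_empty_iff_forall_notMem]
    rintro R ⟨⟨_, hNW⟩, _, hSE⟩
    simp only [Set.mem_iUnion, Set.mem_setOf_eq] at hNW hSE
    obtain ⟨i, hi, hi1, hi2⟩ := hNW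
    obtain ⟨j, hj, hj1, hj2⟩ := hSE
    have hji : j < i := by
      by_contra h
      have : i ≤ j := by omega
      rcases Nat.lt_or_ge i j with h' | h'
      · have := hx j hj i h'
        omega
      · have : i = j := by omega
        subst this
        omega
    have := hy i hi j (le_of_lt hji)
    omega
end

section
/- Suppose an estimator satisfies |a − s| ≤ τ̄·s + δ̄·n where s = loss_f ≤ n, with τ̄ = q·τ and δ̄ ≤ q·τ̄·ε_f for ε_f = s/n and q a sufficiently small absolute constant, and 0 < τ < 1. Then, setting b = 1 − a/n, the interval [(b−δ̄)/(1+τ̄), (b+δ̄)/(1−τ̄)] contains ε_f and has ratio of endpoints at most 1+τ, i.e., ((b+δ̄)(1+τ̄))/((b−δ̄)(1−τ̄)) ≤ 1+τ. -/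
set_option maxHeartbeats 1000000 in
/-- Converting a `(τ̄, δ̄)`-approximation of the distance to monotonicity into a
multiplicative `(1+τ)`-approximation.  There is a sufficiently small absolute
constant `q` (one may take `q = 1/10`) such that: if `a` estimates `lis_f = n − s`
(so `n − a` estimates `s = loss_f`) with `|(n − a) − s| ≤ τ̄·s + δ̄·n`, where
`τ̄ = q·τ`, `δ̄ ≤ q·τ̄·ε_f`, `ε_f = s/n ∈ (0,1]`, and `0 < τ < 1`, then with
`b = 1 − a/n` the interval `[(b−δ̄)/(1+τ̄), (b+δ̄)/(1−τ̄)]` contains `ε_f` and its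
endpoint ratio is at most `1+τ`. -/
theorem stmt16 :
    ∃ q : ℝ, 0 < q ∧
      ∀ n s a τ τb δb b : ℝ, 0 < n → 0 < s → s ≤ n → 0 < τ → τ < 1 →
        τb = q * τ → 0 ≤ δb → δb ≤ q * τb * (s / n) →
        |(n - a) - s| ≤ τb * s + δb * n →
        b = 1 - a / n →
        ((b - δb) / (1 + τb) ≤ s / n ∧ s / n ≤ (b + δb) / (1 - τb) ∧
         ((b + δb) * (1 + τb)) / ((b - δb) * (1 - τb)) ≤ 1 + τ) := by
  refine ⟨1/10, by norm_num, ?_⟩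
  intro n s a τ τb δb b hn hs hsn hτ hτ1 hτb hδb0 hδb habs hb
  set e : ℝ := s / n with he
  have he0 : 0 < e := div_pos hs hn
  have he1 : e ≤ 1 := (div_le_one hn).2 hsn
  have hτb0 : 0 < τb := by rw [hτb]; positivity
  have hτb1 : τb < 1/10 := by rw [hτb]; nlinarith
  -- |b - e| ≤ τb * e + δb
  have habs' : |b - e| ≤ τb * e + δb := by
    have h1 : b - e = ((n - a) - s) / n := by
      rw [hb, he]; field_simp
    rw [h1, abs_div, abs_of_pos hn, div_le_iff₀ hn]
    calc |n - a - s| ≤ τb * s + δb * n := habs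
      _ = (τb * e + δb) * n := by rw [he]; field_simp
  have h2 := abs_le.1 habs'
  have hδbe : δb ≤ τb * e / 10 := by
    calc δb ≤ 1/10 * τb * e := hδb
      _ = τb * e / 10 := by ring
  have hlow : e * (1 - τb) - 2 * δb ≤ b - δb := by nlinarith [h2.1]
  have hhigh : b + δb ≤ e * (1 + τb) + 2 * δb := by nlinarith [h2.2]
  have hpos : 0 < b - δb := by nlinarith
  refine ⟨?_, ?_, ?_⟩
  · rw [div_le_iff₀ (by linarith : (0:ℝ) < 1 + τb)]
    nlinarith [h2.1]
  · rw [le_div_iff₀ (by linarith : (0:ℝ) < 1 - τb)]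
    nlinarith [h2.2]
  · rw [div_le_iff₀ (by nlinarith : (0:ℝ) < (b - δb) * (1 - τb))]
    have hq : τ = 10 * τb := by rw [hτb]; ring
    have hU : b + δb ≤ e * (1 + 6/5 * τb) := by nlinarith [h2.2]
    have hL : e * (1 - 6/5 * τb) ≤ b - δb := by nlinarith [h2.1]
    have k1 : 22 * (τb * τb) ≤ 22/10 * τb := by nlinarith
    have k2 : 0 ≤ 12 * (τb * τb * τb) := by positivity
    have key : (1 + 6/5*τb) * (1 + τb) ≤ (1 + 10*τb) * ((1 - 6/5*τb) * (1 - τb)) := by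
      nlinarith [k1, k2]
    have h3 : (b + δb) * (1 + τb) ≤ e * ((1 + 6/5*τb) * (1 + τb)) := by
      nlinarith [mul_le_mul_of_nonneg_right hU (by linarith : (0:ℝ) ≤ 1 + τb)]
    have h4 : e * ((1 + 10*τb) * ((1 - 6/5*τb) * (1 - τb))) ≤ (1 + τ) * ((b - δb) * (1 - τb)) := by
      rw [hq]
      nlinarith [mul_le_mul_of_nonneg_left hL (by nlinarith : (0:ℝ) ≤ (1 + 10*τb) * (1 - τb))]
    have h5 := mul_le_mul_of_nonneg_left key he0.le
    linarith
end

section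
/- Let B' be a vertical strip over index set X of size w, let s = 4⌈1/α⌉, M = ⌈s·ln(s/(2ξ))⌉, and let B = ⌈αw/2⌉. Order the indices x_1,...,x_w of X so that f(x_1) ≤ ⋯ ≤ f(x_w), write w = qB + r with 0 ≤ r < B, and partition x_1,...,x_{qB} into q consecutive bins of size B. If a multiset R of sM − 1 independent uniform samples from X places at least M samples in every bin, then the set V consisting of the iM-th smallest f-values of the samples (for i = 1,...,s−1) intersects every value interval J with |{x ∈ X : f(x) ∈ J}| ≥ αw. -/
/-!
Since `x` lists `X` in `f`-sorted order, the positions `j` with `f (x j) ∈ [p, p']` form a run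
of consecutive positions, of length at least `α w ≥ 2B - 1`; such a run contains a whole bin.
All samples falling in that bin have their value in `[p, p']`, so at least `M` of the sorted sample
values `y 1 ≤ ⋯ ≤ y N` lie in `[p, p']`. These again form a run, now of length at least `M`, and a
run of `M` consecutive positions in `[1, sM - 1]` contains a multiple `iM` with `1 ≤ i ≤ s - 1`.
-/

open Finset

theorem Finset.eq_Icc_min'_max'_of_ordConnected {α : Type*} [LinearOrder α] [LocallyFiniteOrder α]
    {S : Finset α} (hne : S.Nonempty) (hS : (S : Set α).OrdConnected) :
    S = Icc (S.min' hne) (S.max' hne) := by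
  refine le_antisymm (fun j hj => mem_Icc.2 ⟨S.min'_le j hj, S.le_max' j hj⟩) ?_
  intro j hj
  exact_mod_cast hS.out (S.min'_mem hne) (S.max'_mem hne) (by simpa using hj)

theorem ordConnected_filter_of_monotoneOn {α β : Type*} [Preorder α] [Preorder β] [DecidableLE β]
    {s : Finset α} (hs : (s : Set α).OrdConnected) {g : α → β} (hg : MonotoneOn g s) (p p' : β) :
    ((s.filter fun j => p ≤ g j ∧ g j ≤ p' : Finset α) : Set α).OrdConnected := by
  refine ⟨fun a ha b hb j hab => ?_⟩
  simp only [mem_coe, mem_filter] at ha hb ⊢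
  have hj : j ∈ s := hs.out ha.1 hb.1 hab
  exact ⟨hj, ha.2.1.trans (hg ha.1 hj hab.1), (hg hj hb.1 hab.2).trans hb.2.2⟩

theorem Nat.exists_filter_Icc_eq_Icc_of_monotoneOn {β : Type*} [Preorder β] [DecidableLE β]
    {g : ℕ → β} {n : ℕ} (hg : MonotoneOn g (Set.Icc 1 n)) (p p' : β) :
    ∃ a b, 1 ≤ a ∧ b ≤ n ∧ ((Icc 1 n).filter fun j => p ≤ g j ∧ g j ≤ p') = Icc a b := by
  set S := (Icc 1 n).filter fun j => p ≤ g j ∧ g j ≤ p'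
  rcases S.eq_empty_or_nonempty with hS | hne
  · exact ⟨1, 0, le_rfl, zero_le _, by simpa using hS⟩
  have hmem : ∀ j ∈ S, 1 ≤ j ∧ j ≤ n := fun j hj => mem_Icc.1 (mem_filter.1 hj).1
  refine ⟨S.min' hne, S.max' hne, (hmem _ (S.min'_mem hne)).1, (hmem _ (S.max'_mem hne)).2, ?_⟩
  refine S.eq_Icc_min'_max'_of_ordConnected hne (ordConnected_filter_of_monotoneOn ?_ ?_ p p')
  · rw [coe_Icc]; exact Set.ordConnected_Icc
  · rwa [coe_Icc]

theorem Finset.card_filter_comp_perm {α : Type*} (σ : Equiv.Perm α) {s : Finset α}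
    (hσ : ∀ j ∈ s, σ j ∈ s) (P : α → Prop) [DecidablePred P] :
    #(s.filter fun j => P (σ j)) = #(s.filter P) := by
  have hmap : s.map σ.toEmbedding = s := map_eq_of_subset fun j hj => by
    obtain ⟨i, hi, rfl⟩ := mem_map.1 hj
    exact hσ i hi
  conv_rhs => rw [← hmap, filter_map, card_map]
  rfl

theorem Nat.exists_mul_mem_Icc {k c d : ℕ} (hk : 0 < k) (hcd : c + k ≤ d + 1) :
    ∃ i, c ≤ i * k ∧ i * k ≤ d := by
  refine ⟨(c + k - 1) / k, ?_, ?_⟩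
  · have := Nat.lt_div_mul_add (a := c + k - 1) hk
    omega
  · have := Nat.div_mul_le_self (c + k - 1) k
    omega

theorem Nat.two_mul_ceil_half_le {t : ℝ} (ht : 0 ≤ t) {n : ℕ} (htn : t ≤ n) :
    2 * ⌈t / 2⌉₊ ≤ n + 1 := by
  have hceil : (⌈t / 2⌉₊ : ℝ) < t / 2 + 1 := Nat.ceil_lt_add_one (by positivity)
  have : 2 * ⌈t / 2⌉₊ < n + 2 := by exact_mod_cast (by linarith : (2 * ⌈t / 2⌉₊ : ℝ) < n + 2)
  omega

theorem Nat.one_le_ceil_mul_log_div {s ξ : ℝ} (hs : 2 ≤ s) (hξ0 : 0 < ξ) (hξ1 : ξ < 1) :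
    1 ≤ ⌈s * Real.log (s / (2 * ξ))⌉₊ := by
  refine Nat.one_le_ceil_iff.2 (mul_pos (by linarith) (Real.log_pos ?_))
  rw [one_lt_div (by positivity)]
  linarith

theorem exists_bin_subset_Icc {B q a b : ℕ} (hB : 0 < B) (ha : 1 ≤ a) (hab : a + 2 * B ≤ b + 2)
    (hb : b < q * B + B) :
    ∃ i, 1 ≤ i ∧ i ≤ q ∧ Ioc ((i - 1) * B) (i * B) ⊆ Icc a b := by
  obtain ⟨D, hD₁, hD₂⟩ := Nat.exists_mul_mem_Icc (c := a - 1) (d := b - B) hB (by omega)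
  have hDq : D < q := Nat.lt_of_mul_lt_mul_right (a := B) (by omega)
  refine ⟨D + 1, by omega, hDq, fun j hj => ?_⟩
  rw [mem_Ioc, Nat.add_sub_cancel, Nat.add_one_mul] at hj
  exact mem_Icc.2 ⟨by omega, by omega⟩

theorem exists_bin_subset_filter_of_monotoneOn {β : Type*} [Preorder β] [DecidableLE β]
    {g : ℕ → β} {w B q rr : ℕ} (hg : MonotoneOn g (Set.Icc 1 w)) (hqr : w = q * B + rr)
    (hrr : rr < B) {p p' : β}
    (hcard : 2 * B ≤ #((Icc 1 w).filter fun j => p ≤ g j ∧ g j ≤ p') + 1) :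
    ∃ i, 1 ≤ i ∧ i ≤ q ∧
      Ioc ((i - 1) * B) (i * B) ⊆ (Icc 1 w).filter fun j => p ≤ g j ∧ g j ≤ p' := by
  obtain ⟨a, b, ha, hbw, hrun⟩ := Nat.exists_filter_Icc_eq_Icc_of_monotoneOn hg p p'
  rw [hrun, Nat.card_Icc] at hcard
  rw [hrun]
  exact exists_bin_subset_Icc (by omega) ha (by omega) (by omega)

theorem exists_mul_mem_of_le_card_filter {β : Type*} [Preorder β] [DecidableLE β]
    {y : ℕ → β} {s M : ℕ} (hy : MonotoneOn y (Set.Icc 1 (s * M - 1))) (hM : 0 < M) {p p' : β}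
    (hcard : M ≤ #((Icc 1 (s * M - 1)).filter fun j => p ≤ y j ∧ y j ≤ p')) :
    ∃ i, 1 ≤ i ∧ i ≤ s - 1 ∧ p ≤ y (i * M) ∧ y (i * M) ≤ p' := by
  obtain ⟨c, d, hc, hd, hrun⟩ := Nat.exists_filter_Icc_eq_Icc_of_monotoneOn hy p p'
  rw [hrun, Nat.card_Icc] at hcard
  obtain ⟨i, hci, hid⟩ := Nat.exists_mul_mem_Icc (c := c) (d := d) hM (by omega)
  have hi : 1 ≤ i := Nat.pos_of_ne_zero (by rintro rfl; omega)
  have his : i < s := Nat.lt_of_mul_lt_mul_right (a := M) (by omega)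
  have hmem : i * M ∈ Icc c d := mem_Icc.2 ⟨hci, hid⟩
  rw [← hrun, mem_filter] at hmem
  exact ⟨i, hi, by omega, hmem.2⟩

theorem stmt17_general (α ξ : ℝ) (hα0 : 0 < α) (hξ0 : 0 < ξ) (hξ1 : ξ < 1)
    (w s M B q rr : ℕ)
    (hs : s = 4 * ⌈1 / α⌉₊)
    (hM : M = ⌈(s : ℝ) * Real.log ((s : ℝ) / (2 * ξ))⌉₊)
    (hB : B = ⌈α * (w : ℝ) / 2⌉₊)
    (hqr : w = q * B + rr) (hrr : rr < B)
    (f x : ℕ → ℕ)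
    (hx_mono : ∀ j k, 1 ≤ j → j ≤ k → k ≤ w → f (x j) ≤ f (x k))
    (hx_inj : ∀ j k, 1 ≤ j → j ≤ w → 1 ≤ k → k ≤ w → x j = x k → j = k)
    (X : Finset ℕ) (hX : X = (Finset.Icc 1 w).image x)
    (N : ℕ) (hN : N = s * M - 1)
    (r : ℕ → ℕ)
    (y : ℕ → ℕ)
    (hy_sorted : ∀ j k, 1 ≤ j → j ≤ k → k ≤ N → y j ≤ y k)
    (hy_perm : ∃ σ : Equiv.Perm ℕ,
      (∀ j, 1 ≤ j → j ≤ N → 1 ≤ σ j ∧ σ j ≤ N) ∧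
      (∀ j, 1 ≤ j → j ≤ N → y j = f (r (σ j))))
    (hbins : ∀ i, 1 ≤ i → i ≤ q →
      M ≤ ((Finset.Icc 1 N).filter
            (fun j => r j ∈ (Finset.Ioc ((i - 1) * B) (i * B)).image x)).card)
    (p p' : ℕ)
    (hpop : α * (w : ℝ) ≤ ((X.filter (fun z => p ≤ f z ∧ f z ≤ p')).card : ℝ)) :
    ∃ i, 1 ≤ i ∧ i ≤ s - 1 ∧ p ≤ y (i * M) ∧ y (i * M) ≤ p' := by
  have hM0 : 0 < M := by
    have : (1 : ℝ) ≤ ⌈1 / α⌉₊ := by exact_mod_cast Nat.one_le_ceil_iff.2 (by positivity)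
    rw [hM]
    exact Nat.one_le_ceil_mul_log_div (by rw [hs]; push_cast; linarith) hξ0 hξ1
  set I := (Icc 1 w).filter fun j => p ≤ f (x j) ∧ f (x j) ≤ p'
  have hXI : #(X.filter fun z => p ≤ f z ∧ f z ≤ p') = #I := by
    rw [hX, filter_image]
    exact card_image_of_injOn fun j hj k hk hjk => by
      simp only [coe_filter, mem_Icc] at hj hk
      exact hx_inj j k hj.1.1 hj.1.2 hk.1.1 hk.1.2 hjk
  have hI : 2 * B ≤ #I + 1 := by
    rw [hB, ← hXI]
    exact Nat.two_mul_ceil_half_le (by positivity) hpop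
  obtain ⟨i, hi1, hiq, hbin⟩ := exists_bin_subset_filter_of_monotoneOn (g := fun j => f (x j))
    (fun j hj k hk hjk => hx_mono j k hj.1 hjk hk.2) hqr hrr hI
  have hsamples : M ≤ #((Icc 1 N).filter fun j => p ≤ f (r j) ∧ f (r j) ≤ p') := by
    refine (hbins i hi1 hiq).trans (card_le_card (monotone_filter_right _ fun j _ hj => ?_))
    obtain ⟨k, hk, hkj⟩ := mem_image.1 hj
    rw [← hkj]
    exact (mem_filter.1 (hbin hk)).2
  obtain ⟨σ, hσ, hyσ⟩ := hy_perm
  have hsorted : M ≤ #((Icc 1 N).filter fun j => p ≤ y j ∧ y j ≤ p') := by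
    rw [filter_congr fun j hj => by rw [hyσ j (mem_Icc.1 hj).1 (mem_Icc.1 hj).2],
      card_filter_comp_perm σ (fun j hj => mem_Icc.2 (hσ j (mem_Icc.1 hj).1 (mem_Icc.1 hj).2))
        fun z => p ≤ f (r z) ∧ f (r z) ≤ p']
    exact hsamples
  subst hN
  exact exists_mul_mem_of_le_card_filter (fun j hj k hk hjk => hy_sorted j k hj.1 hjk hk.2) hM0
    hsorted

/-- Deterministic part of the BuildNet correctness proof.  The strip has index set
`X = x '' [1,w]` listed in `f`-sorted order `f(x 1) ≤ ⋯ ≤ f(x w)`; with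
`s = 4⌈1/α⌉`, `M = ⌈s·ln(s/(2ξ))⌉`, `B = ⌈αw/2⌉`, `w = q·B + rr` (`rr < B`),
the first `q·B` positions are partitioned into `q` consecutive bins of size `B`.
`r 1, …, r N` (`N = sM − 1`) are the samples, `y 1 ≤ ⋯ ≤ y N` their `f`-values in
sorted order, and `V = {y (i·M) : 1 ≤ i ≤ s−1}`.  If every bin receives at least
`M` samples, then `V` intersects every value interval `[p, p']` with at least
`α·w` indices of `X` mapping into it. -/
theorem stmt17 (α ξ : ℝ) (hα0 : 0 < α) (hα1 : α ≤ 1) (hξ0 : 0 < ξ) (hξ1 : ξ < 1)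
    (w s M B q rr : ℕ) (hw : 0 < w)
    (hs : s = 4 * ⌈1 / α⌉₊)
    (hM : M = ⌈(s : ℝ) * Real.log ((s : ℝ) / (2 * ξ))⌉₊)
    (hB : B = ⌈α * (w : ℝ) / 2⌉₊)
    (hqr : w = q * B + rr) (hrr : rr < B)
    (f x : ℕ → ℕ)
    (hx_mono : ∀ j k, 1 ≤ j → j ≤ k → k ≤ w → f (x j) ≤ f (x k))
    (hx_inj : ∀ j k, 1 ≤ j → j ≤ w → 1 ≤ k → k ≤ w → x j = x k → j = k)
    (X : Finset ℕ) (hX : X = (Finset.Icc 1 w).image x)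
    (N : ℕ) (hN : N = s * M - 1)
    (r : ℕ → ℕ) (hr : ∀ j, 1 ≤ j → j ≤ N → r j ∈ X)
    (y : ℕ → ℕ)
    (hy_sorted : ∀ j k, 1 ≤ j → j ≤ k → k ≤ N → y j ≤ y k)
    (hy_perm : ∃ σ : Equiv.Perm ℕ,
      (∀ j, 1 ≤ j → j ≤ N → 1 ≤ σ j ∧ σ j ≤ N) ∧
      (∀ j, 1 ≤ j → j ≤ N → y j = f (r (σ j))))
    (hbins : ∀ i, 1 ≤ i → i ≤ q →
      M ≤ ((Finset.Icc 1 N).filter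
            (fun j => r j ∈ (Finset.Ioc ((i - 1) * B) (i * B)).image x)).card)
    (p p' : ℕ)
    (hpop : α * (w : ℝ) ≤ ((X.filter (fun z => p ≤ f z ∧ f z ≤ p')).card : ℝ)) :
    ∃ i, 1 ≤ i ∧ i ≤ s - 1 ∧ p ≤ y (i * M) ∧ y (i * M) ≤ p' :=
  stmt17_general α ξ hα0 hξ0 hξ1 w s M B q rr hs hM hB hqr hrr f x hx_mono hx_inj X hX N hN r y
    hy_sorted hy_perm hbins p p' hpop
end

section
/- In the t-splitter tree rooted at box B (a binary tree of subboxes of B in which each internal node T has two children Box(P_BL(T), S) and Box(S, P_TR(T)) for some point S ∈ T), the following hold: (1) any two boxes in the tree, neither an ancestor of the other, have disjoint index sets; (2) the leaves, ordered left-to-right, form a box chain spanning B; and (3) for every index x ∈ X(B), the set of tree boxes whose index set contains x forms a root-to-leaf path. -/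
/-- A splitter tree rooted at the box with bottom-left corner `P` and top-right
corner `Q` (boxes are identified with their corner pairs): each internal node
with corners `(P, Q)` is split at a point `S` with `P ≺ S ≺ Q` into children
`Box(P,S)` and `Box(S,Q)`. -/
inductive SplitTree : ℕ × ℕ → ℕ × ℕ → Type
  | leaf : ∀ P Q, prec P Q → SplitTree P Q
  | node : ∀ P S Q, prec P S → prec S Q →
      SplitTree P S → SplitTree S Q → SplitTree P Q

/-- The box (corner pair) `b` occurs in the tree. -/
def SplitTree.boxIn : ∀ {P Q}, SplitTree P Q → (ℕ × ℕ) × (ℕ × ℕ) → Prop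
  | P, Q, .leaf _ _ _, b => b = (P, Q)
  | P, Q, .node _ _ _ _ _ l r, b => b = (P, Q) ∨ l.boxIn b ∨ r.boxIn b

/-- `b` is a leaf box of the tree. -/
def SplitTree.leafIn : ∀ {P Q}, SplitTree P Q → (ℕ × ℕ) × (ℕ × ℕ) → Prop
  | P, Q, .leaf _ _ _, b => b = (P, Q)
  | _, _, .node _ _ _ _ _ l r, b => l.leafIn b ∨ r.leafIn b

/-- `anc t b₁ b₂`: `b₂` occurs in the subtree rooted at an occurrence of `b₁`
(ancestor-or-equal relation on boxes of the tree). -/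
def SplitTree.anc : ∀ {P Q}, SplitTree P Q → (ℕ × ℕ) × (ℕ × ℕ) →
    (ℕ × ℕ) × (ℕ × ℕ) → Prop
  | P, Q, .leaf _ _ _, b₁, b₂ => b₁ = (P, Q) ∧ b₂ = (P, Q)
  | P, Q, .node _ _ _ _ _ l r, b₁, b₂ =>
      (b₁ = (P, Q) ∧ (b₂ = (P, Q) ∨ l.boxIn b₂ ∨ r.boxIn b₂)) ∨
      l.anc b₁ b₂ ∨ r.anc b₁ b₂

/-- Leaves of the tree in left-to-right order. -/
def SplitTree.leavesList : ∀ {P Q}, SplitTree P Q → List ((ℕ × ℕ) × (ℕ × ℕ))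
  | P, Q, .leaf _ _ _ => [(P, Q)]
  | _, _, .node _ _ _ _ _ l r => l.leavesList ++ r.leavesList

/-!
Everything goes by induction on the tree. A box of the left subtree of a node split at `S`
has its index set inside `(P.1, S.1]`, a box of the right subtree inside `(S.1, Q.1]`, so
boxes from different subtrees never share an index. Hence two boxes sharing an index lie on
a common branch, and the boxes containing a given index are the root together with the
boxes containing it in the one subtree whose range it lies in. The leaf lists of the two
subtrees end and start at `S`, so their concatenation is again a chain.
-/

namespace SplitTree

variable {P Q : ℕ × ℕ} {b : (ℕ × ℕ) × (ℕ × ℕ)}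

theorem bounds_of_boxIn (t : SplitTree P Q) (hb : t.boxIn b) :
    P.1 ≤ b.1.1 ∧ b.1.1 < b.2.1 ∧ b.2.1 ≤ Q.1 := by
  induction t with
  | leaf P Q h => subst hb; exact ⟨le_rfl, h.1, le_rfl⟩
  | node P S Q hPS hSQ l r ihl ihr =>
    have := hPS.1; have := hSQ.1
    rcases hb with rfl | hb | hb
    · exact ⟨le_rfl, hPS.1.trans hSQ.1, le_rfl⟩
    · have := ihl hb; omega
    · have := ihr hb; omega

theorem boxIn_of_leafIn (t : SplitTree P Q) (hb : t.leafIn b) : t.boxIn b := by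
  induction t with
  | leaf => exact hb
  | node _ _ _ _ _ l r ihl ihr =>
    rcases hb with hb | hb
    · exact .inr (.inl (ihl hb))
    · exact .inr (.inr (ihr hb))

theorem boxIn_of_anc (t : SplitTree P Q) {b₁ : (ℕ × ℕ) × (ℕ × ℕ)} (h : t.anc b₁ b) :
    t.boxIn b := by
  induction t with
  | leaf => exact h.2
  | node _ _ _ _ _ l r ihl ihr =>
    rcases h with ⟨-, h⟩ | h | h
    · exact h
    · exact .inr (.inl (ihl h))
    · exact .inr (.inr (ihr h))

theorem leavesList_ne_nil (t : SplitTree P Q) : t.leavesList ≠ [] := by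
  induction t with
  | leaf => simp [leavesList]
  | node _ _ _ _ _ _ _ ihl _ => simp [leavesList, ihl]

theorem snd_le_fst_of_boxIn_of_boxIn {S : ℕ × ℕ} (l : SplitTree P S) (r : SplitTree S Q)
    {b₁ b₂ : (ℕ × ℕ) × (ℕ × ℕ)} (h₁ : l.boxIn b₁) (h₂ : r.boxIn b₂) : b₁.2.1 ≤ b₂.1.1 :=
  (l.bounds_of_boxIn h₁).2.2.trans (r.bounds_of_boxIn h₂).1

theorem anc_or_anc_of_mem_of_mem (t : SplitTree P Q) {b₁ b₂ : (ℕ × ℕ) × (ℕ × ℕ)} {x : ℕ}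
    (h₁ : t.boxIn b₁) (h₂ : t.boxIn b₂) (hx₁ : b₁.1.1 < x ∧ x ≤ b₁.2.1)
    (hx₂ : b₂.1.1 < x ∧ x ≤ b₂.2.1) : t.anc b₁ b₂ ∨ t.anc b₂ b₁ := by
  induction t with
  | leaf => exact .inl ⟨h₁, h₂⟩
  | node _ _ _ _ _ l r ihl ihr =>
    rcases h₁ with rfl | h₁ | h₁
    · exact .inl (.inl ⟨rfl, h₂⟩)
    all_goals rcases h₂ with rfl | h₂ | h₂
    · exact .inr (.inl ⟨rfl, .inr (.inl h₁)⟩)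
    · exact (ihl h₁ h₂).imp (.inr ∘ .inl) (.inr ∘ .inl)
    · have := snd_le_fst_of_boxIn_of_boxIn l r h₁ h₂; omega
    · exact .inr (.inl ⟨rfl, .inr (.inr h₁)⟩)
    · have := snd_le_fst_of_boxIn_of_boxIn l r h₂ h₁; omega
    · exact (ihr h₁ h₂).imp (.inr ∘ .inr) (.inr ∘ .inr)

theorem fst_eq_of_mem_head?_leavesList (t : SplitTree P Q) (hb : b ∈ t.leavesList.head?) :
    b.1 = P := by
  induction t with
  | leaf => cases hb; rfl
  | node _ _ _ _ _ l r ihl ihr =>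
    rw [leavesList, List.head?_append_of_ne_nil _ l.leavesList_ne_nil] at hb
    exact ihl hb

theorem snd_eq_of_mem_getLast?_leavesList (t : SplitTree P Q)
    (hb : b ∈ t.leavesList.getLast?) : b.2 = Q := by
  induction t with
  | leaf => cases hb; rfl
  | node _ _ _ _ _ l r ihl ihr =>
    rw [leavesList, List.getLast?_append_of_ne_nil _ r.leavesList_ne_nil] at hb
    exact ihr hb

theorem isChain_leavesList (t : SplitTree P Q) :
    t.leavesList.IsChain (fun b₁ b₂ => b₁.2 = b₂.1) := by
  induction t with
  | leaf => exact List.isChain_singleton _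
  | node _ _ _ _ _ l r ihl ihr =>
    refine ihl.append ihr fun b₁ h₁ b₂ h₂ => ?_
    rw [l.snd_eq_of_mem_getLast?_leavesList h₁, r.fst_eq_of_mem_head?_leavesList h₂]

theorem prec_of_mem_leavesList (t : SplitTree P Q) (hb : b ∈ t.leavesList) :
    prec b.1 b.2 := by
  induction t with
  | leaf => simp_all [leavesList]
  | node _ _ _ _ _ l r ihl ihr =>
    rcases List.mem_append.mp hb with hb | hb
    · exact ihl hb
    · exact ihr hb

theorem exists_leafIn_forall_mem_iff_anc (t : SplitTree P Q) {x : ℕ} (hPx : P.1 < x)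
    (hxQ : x ≤ Q.1) :
    ∃ bl, t.leafIn bl ∧ ∀ b, (t.boxIn b ∧ b.1.1 < x ∧ x ≤ b.2.1) ↔ t.anc b bl := by
  induction t with
  | leaf P Q =>
    refine ⟨(P, Q), rfl, fun b => ⟨fun ⟨hb, _⟩ => ⟨hb, rfl⟩, ?_⟩⟩
    rintro ⟨rfl, -⟩
    exact ⟨rfl, hPx, hxQ⟩
  | node P S Q _ _ l r ihl ihr =>
    have mem_root : ∀ b, b = (P, Q) → b.1.1 < x ∧ x ≤ b.2.1 := by
      rintro b rfl
      exact ⟨hPx, hxQ⟩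
    by_cases hxS : x ≤ S.1
    · obtain ⟨bl, hleaf, hiff⟩ := ihl hPx hxS
      have hbl := l.boxIn_of_leafIn hleaf
      refine ⟨bl, .inl hleaf, fun b => ?_⟩
      have not_anc_right : ¬ r.anc b bl := fun h => by
        have := snd_le_fst_of_boxIn_of_boxIn l r hbl (r.boxIn_of_anc h)
        have := l.bounds_of_boxIn hbl
        omega
      have not_mem_right : ¬ (r.boxIn b ∧ b.1.1 < x ∧ x ≤ b.2.1) := fun ⟨hb, hx, _⟩ => by
        have := r.bounds_of_boxIn hb
        omega
      simp only [boxIn, anc, ← hiff]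
      grind
    · obtain ⟨bl, hleaf, hiff⟩ := ihr (by omega) hxQ
      have hbl := r.boxIn_of_leafIn hleaf
      refine ⟨bl, .inr hleaf, fun b => ?_⟩
      have not_anc_left : ¬ l.anc b bl := fun h => by
        have := snd_le_fst_of_boxIn_of_boxIn l r (l.boxIn_of_anc h) hbl
        have := r.bounds_of_boxIn hbl
        omega
      have not_mem_left : ¬ (l.boxIn b ∧ b.1.1 < x ∧ x ≤ b.2.1) := fun ⟨hb, _, hx⟩ => by
        have := l.bounds_of_boxIn hb
        omega
      simp only [boxIn, anc, ← hiff]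
      grind

end SplitTree

/-- In the splitter tree rooted at `Box(P,Q)`:
(1) two boxes of the tree, neither an ancestor of the other, have disjoint index
sets (here the index set of a box with corners `(U,V)` is `(U.1, V.1]`);
(2) the leaves, in left-to-right order, form a box chain spanning `Box(P,Q)`;
(3) for every index `x ∈ (P.1, Q.1]`, the set of tree boxes whose index set
contains `x` is exactly the set of ancestors of some leaf, i.e. a root-to-leaf
path. -/
theorem stmt19 {P Q : ℕ × ℕ} (t : SplitTree P Q) :
    (∀ b₁ b₂, t.boxIn b₁ → t.boxIn b₂ → ¬ t.anc b₁ b₂ → ¬ t.anc b₂ b₁ →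
      ∀ x : ℕ, ¬ ((b₁.1.1 < x ∧ x ≤ b₁.2.1) ∧ (b₂.1.1 < x ∧ x ≤ b₂.2.1))) ∧
    (List.Chain' (fun b₁ b₂ => b₁.2 = b₂.1) t.leavesList ∧
      (∃ b, t.leavesList.head? = some b ∧ b.1 = P) ∧
      (∃ b, t.leavesList.getLast? = some b ∧ b.2 = Q) ∧
      (∀ b ∈ t.leavesList, prec b.1 b.2)) ∧
    (∀ x : ℕ, P.1 < x → x ≤ Q.1 →
      ∃ bl, t.leafIn bl ∧
        ∀ b, (t.boxIn b ∧ b.1.1 < x ∧ x ≤ b.2.1) ↔ t.anc b bl) := by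
  have hhead := List.head?_eq_some_head t.leavesList_ne_nil
  have hlast := List.getLast?_eq_some_getLast t.leavesList_ne_nil
  refine ⟨fun b₁ b₂ h₁ h₂ h₁₂ h₂₁ x hx => ?_,
    ⟨t.isChain_leavesList, ⟨_, hhead, t.fst_eq_of_mem_head?_leavesList hhead⟩,
      ⟨_, hlast, t.snd_eq_of_mem_getLast?_leavesList hlast⟩, fun _ => t.prec_of_mem_leavesList⟩,
    fun _ => t.exists_leafIn_forall_mem_iff_anc⟩
  exact (t.anc_or_anc_of_mem_of_mem h₁ h₂ hx.1 hx.2).elim h₁₂ h₂₁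
end
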